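/- arXiv:2512.02565 — 7 statements merged into one kernel-verified Lean document; each statement's English description precedes it below -/
import Mathlib

section
/- Define, for a ∈ A and finite lists a₁,…,aₙ of elements of A, brace operations a{a₁,…,aₙ} recursively by a{} := a, a{a₁} := d(a)*a₁, and for n ≥ 2, a{a₁,…,aₙ} := (a{a₁,…,a_{n−1}}){aₙ} − Σ_{i=1}^{n−1} a{a₁,…,a_{i−1}, d(aᵢ)*aₙ, a_{i+1},…,a_{n−1}}. Then for all n ≥ 0 and all a, a₁,…,aₙ ∈ A one has a{a₁,…,aₙ} = a₁*⋯*aₙ*dⁿ(a), where dⁿ denotes the n-th iterate of d. -/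
/-- The symmetric brace operation `a{a₁,…,aₙ}` in the Novikov algebra attached to a
commutative ring with a derivation `d`.  The list argument carries the entries in
reverse order `[aₙ, …, a₁]`, so that the defining recursion
`a{a₁,…,aₙ} = (a{a₁,…,a_{n−1}}){aₙ} − Σᵢ a{a₁,…,d(aᵢ)*aₙ,…,a_{n−1}}`
(with `a{} = a`, `a{a₁} = d a * a₁` and `v{z} = d v * z`) becomes a recursion on the
head of the list. -/
def brace {A : Type*} [CommRing A] (d : A → A) (a : A) : List A → A
  | [] => a
  | x :: l => d (brace d a l) * x -
      ∑ j : Fin l.length, brace d a (l.set (j : ℕ) (d (l.get j) * x))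
termination_by l => l.length
decreasing_by
  all_goals simp [List.length_set]

section aux
variable {A : Type*} [CommRing A] (d : A → A)
    (hadd : ∀ x y : A, d (x + y) = d x + d y)
    (hleib : ∀ x y : A, d (x * y) = d x * y + x * d y)

include hleib in
lemma d_one : d 1 = 0 := by
  simpa using hleib 1 1

lemma set_prod_mul (l : List A) (j : ℕ) (hj : j < l.length) (c x : A) :
    (l.set j (c * x)).prod = (l.set j c).prod * x := by
  rw [List.prod_set, List.prod_set]
  simp [hj]; ring

include hadd hleib in
lemma d_list_prod (l : List A) :
    d l.prod = ∑ j : Fin l.length, (l.set (j : ℕ) (d (l.get j))).prod := by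
  induction l with
  | nil => simpa using d_one d hleib
  | cons x t ih =>
    rw [List.prod_cons, hleib]
    simp only [List.length_cons]
    rw [Fin.sum_univ_succ]
    simp only [Fin.val_zero, Fin.val_succ, List.set_cons_zero, List.set_cons_succ,
      List.get_eq_getElem, List.getElem_cons_zero, List.getElem_cons_succ, List.prod_cons]
    rw [ih, Finset.mul_sum]
    simp [List.get_eq_getElem]
end aux

/-- `a{a₁,…,aₙ} = a₁⋯aₙ·dⁿ(a)` for every `n ≥ 0`. -/
theorem brace_eq_prod_iterate {A : Type*} [CommRing A] (d : A → A)
    (hadd : ∀ x y : A, d (x + y) = d x + d y)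
    (hleib : ∀ x y : A, d (x * y) = d x * y + x * d y)
    (a : A) (l : List A) :
    brace d a l = l.prod * d^[l.length] a := by
  have key : ∀ n (l : List A), l.length = n → brace d a l = l.prod * d^[n] a := by
    intro n
    induction n with
    | zero => intro l hl; rw [List.length_eq_zero_iff] at hl; subst hl; simp [brace]
    | succ n ih =>
      intro l hl
      obtain ⟨x, t, rfl⟩ : ∃ x t, l = x :: t := by
        cases l with
        | nil => simp at hl
        | cons x t => exact ⟨x, t, rfl⟩
      have ht : t.length = n := by simpa using hl
      rw [brace, ih t ht]
      have hset : ∀ j : Fin t.length,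
          brace d a (t.set (j : ℕ) (d (t.get j) * x))
            = (t.set (j : ℕ) (d (t.get j))).prod * x * d^[n] a := by
        intro j
        rw [ih _ (by simp [List.length_set, ht]),
          set_prod_mul t j j.isLt (d (t.get j)) x]
      simp only [hset]
      rw [hleib, List.prod_cons, d_list_prod d hadd hleib t, ← Finset.sum_mul,
        ← Finset.sum_mul, Function.iterate_succ_apply']
      ring
  exact key l.length l rfl
end

section
/- For every i ≥ 1 and all f₁,…,f_i ∈ A, one has f₁·d(f₂·d(⋯ f_{i−1}·d(f_i) ⋯)) = Σ_{φ ∈ Inc(i)} ∏_{j=1}^{i} d^{|φ⁻¹(j)|}(f_j), where |φ⁻¹(j)| is the cardinality of the fiber of φ over j and d^m is the m-th iterate of d (in particular the left-hand side equals f₁ when i = 1). -/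
/-- The nested expression `f₁·d(f₂·d(⋯ f_{i−1}·d(f_i) ⋯))` attached to a list
`[f₁, …, f_i]` (equal to `1` on the empty list, and to `f₁` on a singleton). -/
def nest {A : Type*} [CommRing A] (d : A → A) : List A → A
  | [] => 1
  | [x] => x
  | x :: y :: l => x * d (nest d (y :: l))

/-!
Induction on `i`. Differentiating `Σ_{ψ ∈ Inc(i)} ∏_j d^{|ψ⁻¹(j)|}(f_j)` by the Leibniz rule
gives one term for each pair `(ψ, l)`, in which the exponent at `l` grows by one. These pairs
are in bijection with `Inc(i + 1)`: shift `ψ` up by one and send the new first point to `l + 1`;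
the fibre of the new map over `l + 1` is the old one plus that first point.
-/

open Finset

namespace Derivation

variable {R A : Type*} [CommSemiring R] [CommSemiring A] [Algebra R A] (D : Derivation R A A)

theorem map_finset_prod {ι : Type*} [DecidableEq ι] (s : Finset ι) (g : ι → A) :
    D (∏ i ∈ s, g i) = ∑ j ∈ s, ∏ i ∈ s, if i = j then D (g i) else g i := by
  induction s using Finset.induction with
  | empty => simp
  | insert a s ha ih =>
    have hne : ∀ i ∈ s, i ≠ a := fun i hi => ne_of_mem_of_not_mem hi ha
    rw [prod_insert ha, leibniz, ih, sum_insert ha, prod_insert ha, if_pos rfl,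
      prod_congr rfl fun i hi => if_neg (hne i hi), smul_eq_mul, smul_eq_mul, mul_sum, add_comm]
    refine congrArg₂ _ (mul_comm _ _) (sum_congr rfl fun j hj => ?_)
    rw [prod_insert ha, if_neg (hne j hj).symm]

theorem map_prod_iterate {ι : Type*} [Fintype ι] [DecidableEq ι] (m : ι → ℕ) (g : ι → A) :
    D (∏ i, D^[m i] (g i)) = ∑ j, ∏ i, D^[m i + if i = j then 1 else 0] (g i) := by
  rw [map_finset_prod]
  refine sum_congr rfl fun j _ => prod_congr rfl fun i _ => ?_
  split_ifs <;> simp [Function.iterate_succ_apply']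

end Derivation

theorem nest_cons {A : Type*} [CommRing A] (d : A → A) (x : A) {l : List A} (hl : l ≠ []) :
    nest d (x :: l) = x * d (nest d l) := by
  obtain ⟨y, l, rfl⟩ := List.exists_cons_of_ne_nil hl
  rfl

def incMaps (n : ℕ) : Finset (Fin n → Fin (n + 1)) :=
  {φ | ∀ k : Fin n, (k : ℕ) < φ k}

theorem mem_incMaps {n : ℕ} {φ : Fin n → Fin (n + 1)} :
    φ ∈ incMaps n ↔ ∀ k : Fin n, (k : ℕ) < φ k := by
  simp [incMaps]

def incCons {n : ℕ} (ψ : Fin n → Fin (n + 1)) (l : Fin (n + 1)) : Fin (n + 1) → Fin (n + 2) :=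
  Fin.cons l.succ (Fin.succ ∘ ψ)

theorem incCons_injective {n : ℕ} :
    Function.Injective fun p : (Fin n → Fin (n + 1)) × Fin (n + 1) => incCons p.1 p.2 := by
  rintro ⟨ψ, l⟩ ⟨ψ', l'⟩ h
  obtain ⟨hl, hψ⟩ := Fin.cons_inj.mp h
  simp only [Prod.mk.injEq, Fin.succ_inj] at hl ⊢
  exact ⟨(Fin.succ_injective _).comp_left hψ, hl⟩

theorem incCons_mem_incMaps_iff {n : ℕ} {ψ : Fin n → Fin (n + 1)} {l : Fin (n + 1)} :
    incCons ψ l ∈ incMaps (n + 1) ↔ ψ ∈ incMaps n := by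
  simp [mem_incMaps, Fin.forall_fin_succ, incCons]

theorem exists_incCons_eq {n : ℕ} {φ : Fin (n + 1) → Fin (n + 2)} (hφ : ∀ k, φ k ≠ 0) :
    ∃ ψ l, incCons ψ l = φ := by
  refine ⟨fun k => (φ k.succ).pred (hφ _), (φ 0).pred (hφ 0), funext fun k => ?_⟩
  cases k using Fin.cases <;> simp [incCons]

theorem incMaps_succ (n : ℕ) :
    incMaps (n + 1) = (incMaps n ×ˢ univ).image fun p => incCons p.1 p.2 := by
  ext φ
  simp only [mem_image, mem_product, mem_univ, and_true, Prod.exists]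
  constructor
  · intro hφ
    obtain ⟨ψ, l, rfl⟩ := exists_incCons_eq fun k =>
      Fin.pos_iff_ne_zero.mp (Nat.zero_lt_of_lt (mem_incMaps.mp hφ k))
    exact ⟨ψ, l, incCons_mem_incMaps_iff.mp hφ, rfl⟩
  · rintro ⟨ψ, l, hψ, rfl⟩
    exact incCons_mem_incMaps_iff.mpr hψ

theorem card_fiber_incCons_zero {n : ℕ} (ψ : Fin n → Fin (n + 1)) (l : Fin (n + 1)) :
    #{k | incCons ψ l k = 0} = 0 := by
  rw [card_eq_zero, filter_eq_empty_iff]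
  intro k _
  cases k using Fin.cases <;> simp [incCons]

theorem card_fiber_incCons_succ {n : ℕ} (ψ : Fin n → Fin (n + 1)) (l j : Fin (n + 1)) :
    #{k | incCons ψ l k = j.succ} = #{k | ψ k = j} + if j = l then 1 else 0 := by
  rw [card_filter, Fin.sum_univ_succ, card_filter, add_comm]
  simp [incCons, eq_comm]

theorem nest_ofFn_eq_sum_incMaps {R A : Type*} [CommSemiring R] [CommRing A] [Algebra R A]
    (D : Derivation R A A) (n : ℕ) (f : Fin (n + 1) → A) :
    nest D (List.ofFn f) = ∑ φ ∈ incMaps n, ∏ j, D^[#{k | φ k = j}] (f j) := by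
  induction n with
  | zero => simp [incMaps, nest]
  | succ n ih =>
    rw [List.ofFn_succ, nest_cons _ _ (by simp), ih, map_sum, incMaps_succ,
      sum_image incCons_injective.injOn, sum_product, mul_sum]
    refine sum_congr rfl fun ψ _ => ?_
    rw [D.map_prod_iterate, mul_sum]
    refine sum_congr rfl fun l _ => ?_
    rw [eq_comm, Fin.prod_univ_succ, card_fiber_incCons_zero]
    simp only [card_fiber_incCons_succ, Function.iterate_zero_apply]

theorem nest_eq_sum_inc_general {A : Type*} [CommRing A] (d : A → A)
    (hadd : ∀ x y : A, d (x + y) = d x + d y)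
    (hleib : ∀ x y : A, d (x * y) = d x * y + x * d y)
    (i : ℕ) (f : Fin i → A) :
    nest d (List.ofFn f) =
      ∑ φ ∈ Finset.univ.filter
          (fun φ : Fin (i - 1) → Fin i => ∀ k : Fin (i - 1), (k : ℕ) < (φ k : ℕ)),
        ∏ j : Fin i, d^[(Finset.univ.filter (fun k => φ k = j)).card] (f j) := by
  let D : Derivation ℤ A A := .mk' (AddMonoidHom.mk' d hadd).toIntLinearMap fun x y => by
    simp [hleib, smul_eq_mul, mul_comm, add_comm]
  cases i with
  | zero => simp [nest]
  | succ n => exact nest_ofFn_eq_sum_incMaps D n f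

/-- `f₁·d(f₂·d(⋯ f_{i−1}·d(f_i)⋯)) = Σ_{φ ∈ Inc(i)} ∏_j d^{|φ⁻¹(j)|}(f_j)`,
where `Inc(i)` is the set of maps `φ : {1,…,i−1} → {1,…,i}` with `φ(k) > k`
(modelled on `Fin (i-1) → Fin i` with the strict inequality on values). -/
theorem nest_eq_sum_inc {A : Type*} [CommRing A] (d : A → A)
    (hadd : ∀ x y : A, d (x + y) = d x + d y)
    (hleib : ∀ x y : A, d (x * y) = d x * y + x * d y)
    (i : ℕ) (hi : 1 ≤ i) (f : Fin i → A) :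
    nest d (List.ofFn f) =
      ∑ φ ∈ Finset.univ.filter
          (fun φ : Fin (i - 1) → Fin i => ∀ k : Fin (i - 1), (k : ℕ) < (φ k : ℕ)),
        ∏ j : Fin i, d^[(Finset.univ.filter (fun k => φ k = j)).card] (f j) :=
  nest_eq_sum_inc_general d hadd hleib i f
end

section
/- For every i ≥ 1 and all f₁,…,f_i ∈ A, one has f₁·d(f₂·d(⋯ f_{i−1}·d(f_i) ⋯)) = Σ_{w ∈ K_i} c_w · d^{w₁}(f₁)·d^{w₂}(f₂)·⋯·d^{w_i}(f_i), where d^m is the m-th iterate of d. -/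
/-- `K_i`: words `w = w₁⋯w_i` of natural numbers (indexed here by `Fin i`, so `w j`
is the `(j+1)`-st letter) with `w₁+⋯+w_j ≤ j−1` for all `1 ≤ j < i` and
`w₁+⋯+w_i = i−1`. -/
def IsKWord (i : ℕ) (w : Fin i → ℕ) : Prop :=
  (∀ j : Fin i, (j : ℕ) + 1 < i →
    (∑ t ∈ Finset.univ.filter (fun t : Fin i => t ≤ j), w t) ≤ (j : ℕ)) ∧
  (∑ t, w t) = i - 1

/-- The coefficient `c_w = ∏_j C(d_j + w_j, w_j)` where
`d_j = j − 1 − (w₁ + ⋯ + w_j)`. -/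
def kCoeff (i : ℕ) (w : Fin i → ℕ) : ℕ :=
  ∏ j : Fin i,
    Nat.choose
      ((j : ℕ) - (∑ t ∈ Finset.univ.filter (fun t : Fin i => t ≤ j), w t) + w j)
      (w j)

/-!
The identity is the case `m = 0` of an expansion of `d^m (f₁·d(f₂·d(⋯)))`. By the iterated
Leibniz rule `d^m (f₁ · d N) = ∑_{a+b=m} C(m,a) d^a f₁ · d^{b+1} N`, so by induction on the length
the coefficient of a word `(a, w)` for `d^m` is `C(m, a)` times the coefficient of `w` for
`d^{m+1-a}`. This recursion is solved by a product of binomials, which at `m = 0` equals `c_w`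
on `K_i` and vanishes on every other word of weight `i - 1`.
-/

open Finset

section IteratedLeibniz

variable {R : Type*} [NonUnitalNonAssocRing R] {d : R → R}

theorem iterate_apply_mul_eq_sum_antidiagonal (hadd : ∀ x y, d (x + y) = d x + d y)
    (hleib : ∀ x y, d (x * y) = d x * y + x * d y) (n : ℕ) (x y : R) :
    d^[n] (x * y) = ∑ p ∈ antidiagonal n, n.choose p.1 • (d^[p.1] x * d^[p.2] y) := by
  induction n with
  | zero => simp
  | succ n ih =>
    let D : R →+ R := AddMonoidHom.mk' d hadd
    rw [Function.iterate_succ_apply', ih, sum_antidiagonal_choose_succ_nsmul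
      (fun a b => d^[a] x * d^[b] y)]
    change D _ = _
    rw [map_sum, add_comm, ← sum_add_distrib]
    refine sum_congr rfl fun p hp => ?_
    rw [Nat.choose_symm_of_eq_add (mem_antidiagonal.1 hp).symm, map_nsmul, ← smul_add]
    simp only [D, AddMonoidHom.mk'_apply, hleib, Function.iterate_succ_apply']

end IteratedLeibniz

theorem Finset.sum_antidiagonal_add_of_eq_zero {M : Type*} [AddCommMonoid M] (m k : ℕ)
    (F : ℕ × ℕ → M) (hF : ∀ q : ℕ × ℕ, m < q.1 → F q = 0) :
    ∑ q ∈ antidiagonal (m + k), F q = ∑ p ∈ antidiagonal m, F (p.1, p.2 + k) := by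
  simp only [Nat.sum_antidiagonal_eq_sum_range_succ_mk]
  rw [← sum_subset (range_subset_range.2 (by omega : m + 1 ≤ (m + k).succ))
    fun a _ ha => hF _ (by simpa using ha)]
  refine sum_congr rfl fun a ha => ?_
  rw [show m + k - a = m - a + k by have := mem_range.1 ha; omega]

theorem Finset.Nat.sum_antidiagonalTuple_succ {M : Type*} [AddCommMonoid M] (k n : ℕ)
    (F : (Fin (k + 1) → ℕ) → M) :
    ∑ w ∈ antidiagonalTuple (k + 1) n, F w =
      ∑ p ∈ antidiagonal n, ∑ w ∈ antidiagonalTuple k p.2, F (Fin.cons p.1 w) := by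
  rw [sum_sigma']
  refine sum_nbij' (fun w => ⟨(w 0, n - w 0), Fin.tail w⟩) (fun x => Fin.cons x.1.1 x.2)
    ?_ ?_ ?_ ?_ ?_
  · intro w hw
    rw [mem_antidiagonalTuple, Fin.sum_univ_succ] at hw
    simp [mem_antidiagonalTuple, Fin.tail, ← hw]
  · rintro ⟨⟨a, b⟩, w⟩ hx
    simp only [mem_sigma, HasAntidiagonal.mem_antidiagonal, mem_antidiagonalTuple] at hx
    simp [mem_antidiagonalTuple, Fin.sum_univ_succ, hx.2, hx.1]
  · simp
  · rintro ⟨⟨a, b⟩, w⟩ hx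
    simp only [mem_sigma, HasAntidiagonal.mem_antidiagonal] at hx
    simp [← hx.1]
  · simp

/-- The `j`-th factor counts the ways to pick which of the `m + j` derivations acting on `f_j`
(the `m` outer ones and the `j` to its left) that are not used by `f₀, …, f_{j-1}` hit `f_j`.
The truncated subtraction is harmless: at the first `j` where the partial sum of `w` exceeds
`m + j`, the factor is already `0`. -/
def nestCoeff {i : ℕ} (m : ℕ) (w : Fin i → ℕ) : ℕ :=
  ∏ j : Fin i, (m + j - Fin.partialSum w j.castSucc).choose (w j)

theorem nestCoeff_cons {i : ℕ} (m a : ℕ) (w : Fin i → ℕ) :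
    nestCoeff m (Fin.cons a w : Fin (i + 1) → ℕ) = m.choose a * nestCoeff (m + 1 - a) w := by
  rcases lt_or_ge m a with ha | ha
  · simp [nestCoeff, Fin.prod_univ_succ, Nat.choose_eq_zero_of_lt ha]
  simp only [nestCoeff, Fin.prod_univ_succ, Fin.castSucc_zero, Fin.partialSum_zero,
    Fin.cons_zero, Fin.castSucc_succ, Fin.partialSum_succ', Fin.tail_cons, Fin.cons_succ,
    Fin.val_zero, Fin.val_succ, add_zero, Nat.sub_zero]
  congr 1
  refine prod_congr rfl fun j _ => ?_
  congr 1
  omega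

theorem partialSum_succ_le_of_nestCoeff_ne_zero {i m : ℕ} {w : Fin i → ℕ}
    (h : nestCoeff m w ≠ 0) (j : Fin i) : Fin.partialSum w j.succ ≤ m + j := by
  induction w using Fin.consInduction generalizing m with
  | elim0 => exact j.elim0
  | cons a w ih =>
    rw [nestCoeff_cons, mul_ne_zero_iff, Ne, Nat.choose_eq_zero_iff, not_lt] at h
    rw [Fin.partialSum_succ', Fin.cons_zero, Fin.tail_cons]
    cases j using Fin.cases with
    | zero => simpa using h.1
    | succ j =>
      have := ih h.2 j
      rw [Fin.val_succ]
      omega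

theorem sum_filter_le_eq_partialSum {M : Type*} [AddCommMonoid M] {n : ℕ} (w : Fin n → M)
    (j : Fin n) : ∑ t ∈ univ.filter (· ≤ j), w t = Fin.partialSum w j.succ := by
  induction w using Fin.consInduction with
  | elim0 => exact j.elim0
  | cons a w ih =>
    rw [Fin.partialSum_succ', Fin.cons_zero, Fin.tail_cons, sum_filter, Fin.sum_univ_succ]
    cases j using Fin.cases with
    | zero => simp
    | succ j => simp [Fin.succ_le_succ_iff, ← sum_filter, ih]

theorem kCoeff_eq_nestCoeff_zero {i : ℕ} {w : Fin i → ℕ} (hw : IsKWord i w) :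
    kCoeff i w = nestCoeff 0 w := by
  refine prod_congr rfl fun j _ => ?_
  have hle : ∑ t ∈ univ.filter (· ≤ j), w t ≤ j := by
    have := hw.2
    by_cases hj : (j : ℕ) + 1 < i
    · exact hw.1 j hj
    · calc _ ≤ ∑ t, w t := sum_le_sum_of_subset (filter_subset _ _)
        _ = j := by omega
  rw [sum_filter_le_eq_partialSum, Fin.partialSum_succ] at hle ⊢
  congr 1
  omega

theorem isKWord_of_nestCoeff_ne_zero {i : ℕ} {w : Fin i → ℕ} (hsum : ∑ t, w t = i - 1)
    (h : nestCoeff 0 w ≠ 0) : IsKWord i w :=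
  ⟨fun j _ => by
    simpa [sum_filter_le_eq_partialSum] using partialSum_succ_le_of_nestCoeff_ne_zero h j, hsum⟩

section Nest

variable {A : Type*} [CommRing A] {d : A → A}

theorem nest_ofFn_succ_succ {n : ℕ} (f : Fin (n + 2) → A) :
    nest d (List.ofFn f) = f 0 * d (nest d (List.ofFn fun j => f j.succ)) := by
  rw [List.ofFn_succ, List.ofFn_succ]
  rfl

theorem iterate_nest_ofFn (hadd : ∀ x y : A, d (x + y) = d x + d y)
    (hleib : ∀ x y : A, d (x * y) = d x * y + x * d y) (i m : ℕ) (f : Fin (i + 1) → A) :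
    d^[m] (nest d (List.ofFn f)) =
      ∑ w ∈ Nat.antidiagonalTuple (i + 1) (m + i), nestCoeff m w • ∏ j, d^[w j] (f j) := by
  induction i generalizing m with
  | zero => simp [nest, nestCoeff]
  | succ i ih =>
    rw [nest_ofFn_succ_succ, iterate_apply_mul_eq_sum_antidiagonal hadd hleib,
      Nat.sum_antidiagonalTuple_succ, sum_antidiagonal_add_of_eq_zero m (i + 1)]
    · refine sum_congr rfl fun p hp => ?_
      obtain rfl := HasAntidiagonal.mem_antidiagonal.1 hp
      rw [← Function.iterate_succ_apply, ih, mul_sum, smul_sum,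
        show p.2.succ + i = p.2 + (i + 1) by omega]
      refine sum_congr rfl fun w _ => ?_
      rw [nestCoeff_cons, Fin.prod_univ_succ (n := i + 1),
        show p.1 + p.2 + 1 - p.1 = p.2.succ by omega, mul_smul, mul_smul_comm]
      simp only [Fin.cons_zero, Fin.cons_succ]
    · intro q hq
      exact sum_eq_zero fun w _ => by
        rw [nestCoeff_cons, Nat.choose_eq_zero_of_lt hq, zero_mul, zero_smul]

theorem nest_ofFn_eq_sum (hadd : ∀ x y : A, d (x + y) = d x + d y)
    (hleib : ∀ x y : A, d (x * y) = d x * y + x * d y) {i : ℕ} (f : Fin i → A) :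
    nest d (List.ofFn f) =
      ∑ w ∈ Nat.antidiagonalTuple i (i - 1), nestCoeff 0 w • ∏ j, d^[w j] (f j) := by
  cases i with
  | zero => simp [nest, nestCoeff]
  | succ i => simpa using iterate_nest_ofFn hadd hleib i 0 f

end Nest

theorem nest_eq_sum_kwords_general {A : Type*} [CommRing A] (d : A → A)
    (hadd : ∀ x y : A, d (x + y) = d x + d y)
    (hleib : ∀ x y : A, d (x * y) = d x * y + x * d y)
    (i : ℕ) (f : Fin i → A) :
    nest d (List.ofFn f) =
      ∑ᶠ w ∈ {w : Fin i → ℕ | IsKWord i w},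
        kCoeff i w • ∏ j : Fin i, d^[w j] (f j) := by
  classical
  have hK : {w : Fin i → ℕ | IsKWord i w} =
      ↑((Nat.antidiagonalTuple i (i - 1)).filter (IsKWord i)) := by
    ext w
    simpa [Nat.mem_antidiagonalTuple] using fun hw : IsKWord i w => hw.2
  rw [hK, finsum_mem_coe_finset, nest_ofFn_eq_sum hadd hleib, sum_filter]
  refine sum_congr rfl fun w hw => ?_
  split_ifs with h
  · rw [kCoeff_eq_nestCoeff_zero h]
  · rw [of_not_not (mt (isKWord_of_nestCoeff_ne_zero (Nat.mem_antidiagonalTuple.1 hw)) h),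
      zero_smul]

/-- `f₁·d(f₂·d(⋯ f_{i−1}·d(f_i)⋯)) = Σ_{w ∈ K_i} c_w·d^{w₁}(f₁)⋯d^{w_i}(f_i)`. -/
theorem nest_eq_sum_kwords {A : Type*} [CommRing A] (d : A → A)
    (hadd : ∀ x y : A, d (x + y) = d x + d y)
    (hleib : ∀ x y : A, d (x * y) = d x * y + x * d y)
    (i : ℕ) (hi : 1 ≤ i) (f : Fin i → A) :
    nest d (List.ofFn f) =
      ∑ᶠ w ∈ {w : Fin i → ℕ | IsKWord i w},
        kCoeff i w • ∏ j : Fin i, d^[w j] (f j) :=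
  nest_eq_sum_kwords_general d hadd hleib i f
end

section
/- For every i ≥ 1, the map sending φ ∈ Inc(i) to the word (|φ⁻¹(1)|, |φ⁻¹(2)|, …, |φ⁻¹(i)|) of fiber cardinalities takes values in K_i, and for every w ∈ K_i the number of φ ∈ Inc(i) with |φ⁻¹(j)| = w_j for all j ∈ {1,…,i} equals c_w. -/
/-!
The fibres `T j = φ⁻¹(j)` of `φ ∈ Inc(i)` are pairwise disjoint sets with `T j ⊆ {k | k < j}`
(0-indexed) and `#(T j) = w j`, and when `∑ w = i - 1` every such family is the family of fibres
of exactly one `φ`. These families are counted by choosing `T 0, T 1, …` in turn: the admissible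
sets `{k | k < j}` increase with `j`, so all earlier choices lie inside `{k | k < j}` and `T j` is
a `w j`-subset of a pool of `j - (w 0 + ⋯ + w (j - 1))` elements. The prefix conditions defining
`K_i` are the bounds `#{k | φ k ≤ j} ≤ #{k | k < j} = j`.
-/

open Finset Function

theorem Fin.sum_filter_lt_succ {M : Type*} [AddCommMonoid M] {n : ℕ} (f : Fin (n + 1) → M)
    (j : Fin n) : ∑ t with t < j.succ, f t = f 0 + ∑ t with t < j, f t.succ := by
  simp [sum_filter, Fin.sum_univ_succ, Fin.succ_pos]

section DisjointFamilies

variable {α ι : Type*}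

open scoped Classical in
noncomputable def disjointFamilies [Fintype ι] (P : ι → Finset α) (w : ι → ℕ) :
    Finset (ι → Finset α) :=
  {T ∈ Fintype.piFinset fun j => (P j).powersetCard (w j) | Pairwise (Disjoint on T)}

theorem mem_disjointFamilies [Fintype ι] {P : ι → Finset α} {w : ι → ℕ} {T : ι → Finset α} :
    T ∈ disjointFamilies P w ↔ (∀ j, T j ⊆ P j ∧ #(T j) = w j) ∧ Pairwise (Disjoint on T) := by
  simp [disjointFamilies]

variable [DecidableEq α]

theorem cons_mem_disjointFamilies {n : ℕ} {P : Fin (n + 1) → Finset α} {w : Fin (n + 1) → ℕ}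
    {T₀ : Finset α} {T : Fin n → Finset α} :
    Fin.cons T₀ T ∈ disjointFamilies P w ↔
      T₀ ∈ (P 0).powersetCard (w 0) ∧
        T ∈ disjointFamilies (fun j => P j.succ \ T₀) (Fin.tail w) := by
  simp only [mem_disjointFamilies, Fin.forall_fin_succ, pairwise_fin_succ_iff, onFun,
    Fin.cons_zero, Fin.cons_succ, mem_powersetCard, subset_sdiff, Fin.tail]
  constructor
  · rintro ⟨⟨h0, hT⟩, hd0, -, hd⟩
    exact ⟨h0, fun j => ⟨⟨(hT j).1, hd0 j⟩, (hT j).2⟩, hd⟩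
  · rintro ⟨h0, hT, hd⟩
    exact ⟨⟨h0, fun j => ⟨(hT j).1.1, (hT j).2⟩⟩, fun j => (hT j).1.2,
      fun j => (hT j).1.2.symm, hd⟩

theorem card_disjointFamilies {n : ℕ} (P : Fin n → Finset α) (hP : Monotone P)
    (w : Fin n → ℕ) :
    #(disjointFamilies P w) = ∏ j, (#(P j) - ∑ t with t < j, w t).choose (w j) := by
  induction n with
  | zero => simp [disjointFamilies, Subsingleton.elim _ (Fin.elim0 : Fin 0 → Finset α)]
  | succ n ih =>
    have hsplit : #(disjointFamilies P w) = ∑ T₀ ∈ (P 0).powersetCard (w 0),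
        #(disjointFamilies (fun j => P j.succ \ T₀) (Fin.tail w)) := by
      rw [← card_sigma]
      refine card_nbij' (fun T => ⟨T 0, Fin.tail T⟩) (fun p => Fin.cons p.1 p.2) ?_ ?_ ?_ ?_
      · intro T hT
        rw [mem_coe, ← Fin.cons_self_tail T, cons_mem_disjointFamilies] at hT
        simpa using hT
      · rintro ⟨T₀, T⟩ h
        simpa [cons_mem_disjointFamilies] using h
      · intro T _
        exact Fin.cons_self_tail T
      · rintro ⟨T₀, T⟩ _
        simp
    have hfiber : ∀ T₀ ∈ (P 0).powersetCard (w 0),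
        #(disjointFamilies (fun j => P j.succ \ T₀) (Fin.tail w)) =
          ∏ j : Fin n, (#(P j.succ) - w 0 - ∑ t with t < j, w t.succ).choose (w j.succ) := by
      intro T₀ hT₀
      have hsub : ∀ j : Fin n, T₀ ⊆ P j.succ :=
        fun j => (mem_powersetCard.1 hT₀).1.trans (hP (Fin.zero_le _))
      rw [ih _ (fun a b hab => sdiff_le_sdiff_right (hP (Fin.succ_le_succ_iff.2 hab)))]
      simp [card_sdiff_of_subset (hsub _), (mem_powersetCard.1 hT₀).2, Fin.tail]
    rw [hsplit, sum_const_nat hfiber, card_powersetCard, Fin.prod_univ_succ]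
    simp [Fin.sum_filter_lt_succ, Nat.sub_sub]

theorem exists_mem_of_mem_disjointFamilies [Fintype α] [Fintype ι] {P : ι → Finset α}
    {w : ι → ℕ} (hw : ∑ j, w j = Fintype.card α) {T : ι → Finset α}
    (hT : T ∈ disjointFamilies P w) (a : α) : ∃ j, a ∈ T j := by
  rw [mem_disjointFamilies] at hT
  have hcover : univ.biUnion T = univ := by
    refine eq_univ_of_card _ ?_
    rw [card_biUnion fun i _ j _ hij => hT.2 hij, ← hw]
    exact sum_congr rfl fun j _ => (hT.1 j).2
  simpa using (hcover.symm ▸ mem_univ a : a ∈ univ.biUnion T)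

theorem card_filter_fibers_eq_card_disjointFamilies [Fintype α] [Fintype ι] [DecidableEq ι]
    (P : ι → Finset α) (w : ι → ℕ) (hw : ∑ j, w j = Fintype.card α) :
    #{φ : α → ι | (∀ a, a ∈ P (φ a)) ∧ ∀ j, #{a | φ a = j} = w j} =
      #(disjointFamilies P w) := by
  refine card_bij (fun φ _ j => {a | φ a = j}) ?_ ?_ ?_
  · intro φ hφ
    simp only [mem_filter, mem_univ, true_and] at hφ
    refine mem_disjointFamilies.2 ⟨fun j => ⟨?_, hφ.2 j⟩, fun j j' hjj' => ?_⟩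
    · intro a ha
      exact (mem_filter.1 ha).2 ▸ hφ.1 a
    · exact disjoint_filter.2 fun a _ h h' => hjj' (h.symm.trans h')
  · intro φ _ ψ _ h
    funext a
    have ha : a ∈ ({b | φ b = φ a} : Finset α) := by simp
    rw [congrFun h (φ a)] at ha
    exact ((mem_filter.1 ha).2).symm
  · intro T hT
    choose φ hφ using exists_mem_of_mem_disjointFamilies hw hT
    obtain ⟨hsize, hdisj⟩ := mem_disjointFamilies.1 hT
    have hfiber : ∀ j, ({a | φ a = j} : Finset α) = T j := by
      intro j
      ext a
      simp only [mem_filter, mem_univ, true_and]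
      refine ⟨fun h => h ▸ hφ a, fun ha => ?_⟩
      by_contra hne
      exact disjoint_left.1 (hdisj hne) (hφ a) ha
    refine ⟨φ, ?_, funext hfiber⟩
    simp only [mem_filter, mem_univ, true_and, hfiber]
    exact ⟨fun a => (hsize _).1 (hφ a), fun j => (hsize j).2⟩

end DisjointFamilies

theorem IsKWord.sum_filter_le_le {i : ℕ} {w : Fin i → ℕ} (hw : IsKWord i w) (j : Fin i) :
    ∑ t with t ≤ j, w t ≤ j := by
  by_cases hj : (j : ℕ) + 1 < i
  · exact hw.1 j hj
  · have hall : ({t | t ≤ j} : Finset (Fin i)) = univ :=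
      filter_true_of_mem fun t _ => Fin.le_def.2 (by omega)
    rw [hall, hw.2]
    omega

theorem isKWord_card_fibers {i : ℕ} (φ : Fin (i - 1) → Fin i)
    (hφ : ∀ k : Fin (i - 1), (k : ℕ) < (φ k : ℕ)) :
    IsKWord i (fun j => #{k | φ k = j}) := by
  refine ⟨fun j _ => ?_, ?_⟩
  · calc ∑ t with t ≤ j, #{k | φ k = t}
        = #{k | φ k ≤ j} := by simp [sum_card_fiberwise_eq_card_filter]
      _ ≤ #{k : Fin (i - 1) | (k : ℕ) < j} :=
        card_le_card fun k hk => by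
          simp only [mem_filter, mem_univ, true_and, Fin.le_def] at hk ⊢
          exact (hφ k).trans_le hk
      _ ≤ j := by simp [Fin.card_filter_val_lt]
  · simp [sum_card_fiberwise_eq_card_filter]

theorem inc_fibers_kword_and_count_general (i : ℕ) :
    (∀ φ : Fin (i - 1) → Fin i, (∀ k : Fin (i - 1), (k : ℕ) < (φ k : ℕ)) →
      IsKWord i (fun j => (Finset.univ.filter (fun k => φ k = j)).card)) ∧
    (∀ w : Fin i → ℕ, IsKWord i w →
      (Finset.univ.filter (fun φ : Fin (i - 1) → Fin i =>
        (∀ k : Fin (i - 1), (k : ℕ) < (φ k : ℕ)) ∧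
        ∀ j : Fin i, (Finset.univ.filter (fun k => φ k = j)).card = w j)).card
        = kCoeff i w) := by
  refine ⟨isKWord_card_fibers, fun w hw => ?_⟩
  let P : Fin i → Finset (Fin (i - 1)) := fun j => {k | (k : ℕ) < j}
  have hP : Monotone P := fun j j' hjj' k => by
    simp only [P, mem_filter, mem_univ, true_and]
    exact fun hk => hk.trans_le hjj'
  have hsum : ∑ j, w j = Fintype.card (Fin (i - 1)) := by simpa using hw.2
  convert (card_filter_fibers_eq_card_disjointFamilies P w hsum).trans
    (card_disjointFamilies P hP w) using 1
  · simp [P]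
  · refine prod_congr rfl fun j _ => ?_
    have hle := hw.sum_filter_le_le j
    rw [filter_ge_eq_Iic, ← sum_Iio_add_eq_sum_Iic, ← filter_gt_eq_Iio] at hle ⊢
    simp only [P, Fin.card_filter_val_lt]
    -- `kCoeff` subtracts the prefix sum including `w j`; `hle` makes that subtraction exact.
    congr 1
    omega

/-- the word of fiber cardinalities of any `φ ∈ Inc(i)` lies in `K_i`,
and for every `w ∈ K_i` the number of `φ ∈ Inc(i)` with fiber cardinalities `w`
equals `c_w`.  Here `Inc(i)` is the set of maps `φ : {1,…,i−1} → {1,…,i}` with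
`φ(k) > k`, modelled on `Fin (i-1) → Fin i`. -/
theorem inc_fibers_kword_and_count (i : ℕ) (hi : 1 ≤ i) :
    (∀ φ : Fin (i - 1) → Fin i, (∀ k : Fin (i - 1), (k : ℕ) < (φ k : ℕ)) →
      IsKWord i (fun j => (Finset.univ.filter (fun k => φ k = j)).card)) ∧
    (∀ w : Fin i → ℕ, IsKWord i w →
      (Finset.univ.filter (fun φ : Fin (i - 1) → Fin i =>
        (∀ k : Fin (i - 1), (k : ℕ) < (φ k : ℕ)) ∧
        ∀ j : Fin i, (Finset.univ.filter (fun k => φ k = j)).card = w j)).card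
        = kCoeff i w) :=
  inc_fibers_kword_and_count_general i
end

section
/- Define, for u = u₁⋯u_i ∈ K_i and v = v₁⋯v_j ∈ K_j, the word u ∨ v := u₁⋯u_i v₁⋯v_{j−1}(v_j+1) of length i+j. Then u ∨ v ∈ K_{i+j}; moreover, for every i ≥ 2 and every w ∈ K_i there exists a unique triple (j, u, v) with 1 ≤ j < i, u ∈ K_j, v ∈ K_{i−j} and w = u ∨ v. -/
/-
Call `i < n` a return of `w ∈ K_n` if `w₁ + ⋯ + w_i = i - 1`. For `u ∈ K_i` and `v ∈ K_j`, the
prefix sums of `u ∨ v` are those of `u` up to `i`, so `i` is a return; beyond `i` they are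
`i - 1` plus prefix sums of `v`, hence at most `k - 2` at every `k < i + j`, so `i` is the last
return, and raising the final letter brings the total to `i + j - 1`. Conversely, cutting
`w ∈ K_n` (`n ≥ 2`) at its last return, which exists since `w₁ = 0`, and lowering the last
letter by one writes `w = u ∨ v` with `u, v ∈ K`. Uniqueness follows because the length of `u`
is forced to be the last return and `bumpLast` is injective.
-/

/-- A list `w = w₁⋯w_i` of natural numbers is a K-word (an element of `K_i` with
`i = w.length`) if `i ≥ 1`, `w₁+⋯+w_j ≤ j−1` for all `1 ≤ j < i`, and
`w₁+⋯+w_i = i−1`. -/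
def IsKList (l : List ℕ) : Prop :=
  1 ≤ l.length ∧
  (∀ j : ℕ, 1 ≤ j → j < l.length → (l.take j).sum ≤ j - 1) ∧
  l.sum = l.length - 1

/-- Add `1` to the last letter of a list (so `u ++ bumpLast v` is the word
`u ∨ v = u₁⋯u_i v₁⋯v_{j−1}(v_j+1)`). -/
def bumpLast : List ℕ → List ℕ
  | [] => []
  | [x] => [x + 1]
  | x :: y :: l => x :: bumpLast (y :: l)

lemma bumpLast_append_singleton (l : List ℕ) (x : ℕ) : bumpLast (l ++ [x]) = l ++ [x + 1] := by
  induction l with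
  | nil => rfl
  | cons a t ih =>
    cases t with
    | nil => rfl
    | cons b t => exact congrArg (a :: ·) ih

lemma length_bumpLast (l : List ℕ) : (bumpLast l).length = l.length := by
  rcases l.eq_nil_or_concat' with rfl | ⟨t, a, rfl⟩
  · rfl
  · simp [bumpLast_append_singleton]

lemma sum_bumpLast {l : List ℕ} (h : l ≠ []) : (bumpLast l).sum = l.sum + 1 := by
  obtain ⟨t, a, rfl⟩ := (l.eq_nil_or_concat').resolve_left h
  simp [bumpLast_append_singleton, add_assoc]

lemma take_bumpLast {l : List ℕ} {m : ℕ} (h : m < l.length) :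
    (bumpLast l).take m = l.take m := by
  rcases l.eq_nil_or_concat' with rfl | ⟨t, a, rfl⟩
  · simp at h
  · simp only [List.length_append, List.length_singleton] at h
    rw [bumpLast_append_singleton, List.take_append_of_le_length (by omega),
      List.take_append_of_le_length (by omega)]

lemma bumpLast_injective : Function.Injective bumpLast := by
  intro u v h
  have hlen : u.length = v.length := by
    simpa only [length_bumpLast] using congrArg List.length h
  rcases u.eq_nil_or_concat' with rfl | ⟨s, a, rfl⟩
  · exact (List.length_eq_zero_iff.mp hlen.symm).symm
  · obtain ⟨t, b, rfl⟩ := v.eq_nil_or_concat'.resolve_left (by rintro rfl; simp at hlen)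
    rw [bumpLast_append_singleton, bumpLast_append_singleton] at h
    obtain ⟨rfl, hab⟩ := List.append_inj' h rfl
    simp only [List.cons.injEq, add_left_inj, and_true] at hab
    rw [hab]

lemma sum_take_append_bumpLast {u v : List ℕ} {k : ℕ} (h₁ : u.length ≤ k)
    (h₂ : k < u.length + v.length) :
    ((u ++ bumpLast v).take k).sum = u.sum + (v.take (k - u.length)).sum := by
  rw [List.take_append, List.take_of_length_le h₁, List.sum_append, take_bumpLast (by omega)]

namespace IsKList

lemma take {w : List ℕ} (hw : IsKList w) {k : ℕ} (hk : k ≤ w.length)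
    (hsum : (w.take k).sum + 1 = k) : IsKList (w.take k) := by
  obtain ⟨-, hprefix, -⟩ := hw
  have hlen : (w.take k).length = k := List.length_take_of_le hk
  refine ⟨by omega, fun j hj₁ hj₂ => ?_, by omega⟩
  rw [List.take_take, min_eq_left (by omega)]
  exact hprefix j hj₁ (by omega)

lemma append_bumpLast {u v : List ℕ} (hu : IsKList u) (hv : IsKList v) :
    IsKList (u ++ bumpLast v) := by
  obtain ⟨hu₁, hu₂, hu₃⟩ := hu
  obtain ⟨hv₁, hv₂, hv₃⟩ := hv
  have hv : v ≠ [] := List.ne_nil_of_length_pos hv₁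
  simp only [IsKList, List.length_append, length_bumpLast, List.sum_append, sum_bumpLast hv]
  refine ⟨by omega, fun k hk₁ hk₂ => ?_, by omega⟩
  rcases lt_or_ge k u.length with hk | hk
  · rw [List.take_append_of_le_length hk.le]
    exact hu₂ k hk₁ hk
  · rw [sum_take_append_bumpLast hk hk₂]
    rcases (k - u.length).eq_zero_or_pos with h | h
    · rw [h, List.take_zero, List.sum_nil]
      omega
    · have := hv₂ (k - u.length) h (by omega)
      omega

end IsKList

def lastReturn (w : List ℕ) : ℕ :=
  Nat.findGreatest (fun k => (w.take k).sum + 1 = k) (w.length - 1)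

section lastReturn

variable {w : List ℕ} {k : ℕ}

lemma lastReturn_le : lastReturn w ≤ w.length - 1 := Nat.findGreatest_le _

lemma le_lastReturn (hk : k < w.length) (h : (w.take k).sum + 1 = k) : k ≤ lastReturn w :=
  Nat.le_findGreatest (by omega) h

lemma sum_take_lastReturn_add_one (hk : k < w.length) (h : (w.take k).sum + 1 = k) :
    (w.take (lastReturn w)).sum + 1 = lastReturn w :=
  Nat.findGreatest_spec (P := fun k => (w.take k).sum + 1 = k) (by omega) h

lemma sum_take_add_one_ne_of_lastReturn_lt (h₁ : lastReturn w < k) (h₂ : k < w.length) :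
    (w.take k).sum + 1 ≠ k :=
  Nat.findGreatest_is_greatest (P := fun k => (w.take k).sum + 1 = k) h₁ (by omega)

end lastReturn

lemma lastReturn_append_bumpLast {u v : List ℕ} (hu : IsKList u) (hv : IsKList v) :
    lastReturn (u ++ bumpLast v) = u.length := by
  obtain ⟨hu₁, -, hu₃⟩ := hu
  obtain ⟨hv₁, hv₂, -⟩ := hv
  rw [lastReturn, Nat.findGreatest_eq_iff, List.length_append, length_bumpLast]
  refine ⟨by omega, fun hu₀ => ?_, fun k hk₁ hk₂ => ?_⟩
  · rw [List.take_left]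
    omega
  · rw [sum_take_append_bumpLast hk₁.le (by omega)]
    have := hv₂ (k - u.length) (by omega) (by omega)
    omega

lemma exists_isKList_bumpLast_eq {r : List ℕ} (h₁ : 1 ≤ r.length)
    (h₂ : ∀ j, 1 ≤ j → j < r.length → (r.take j).sum ≤ j - 1) (h₃ : r.sum = r.length) :
    ∃ v, IsKList v ∧ bumpLast v = r := by
  obtain ⟨t, a, rfl⟩ := (r.eq_nil_or_concat').resolve_left (List.ne_nil_of_length_pos h₁)
  simp only [List.length_append, List.length_singleton, List.sum_append, List.sum_singleton]
    at h₁ h₂ h₃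
  have htake : ∀ j ≤ t.length, (t ++ [a]).take j = t.take j :=
    fun j hj => List.take_append_of_le_length hj
  have ht : t.sum ≤ t.length - 1 := by
    rcases t.length.eq_zero_or_pos with h | h
    · simp [List.length_eq_zero_iff.mp h]
    · simpa [htake] using h₂ t.length h (by omega)
  refine ⟨t ++ [a - 1], ⟨?_, fun j hj₁ hj₂ => ?_, ?_⟩, ?_⟩
  · simp
  · simp only [List.length_append, List.length_singleton] at hj₂
    rw [List.take_append_of_le_length (by omega), ← htake j (by omega)]
    exact h₂ j hj₁ (by omega)
  · simp only [List.sum_append, List.sum_singleton, List.length_append, List.length_singleton]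
    omega
  · rw [bumpLast_append_singleton, Nat.sub_add_cancel (by omega)]

lemma IsKList.exists_eq_append_bumpLast {w : List ℕ} (hw : IsKList w) (hlen : 2 ≤ w.length) :
    ∃ u v, IsKList u ∧ IsKList v ∧ w = u ++ bumpLast v := by
  obtain ⟨-, hprefix, hsum⟩ := id hw
  have hP₁ : (w.take 1).sum + 1 = 1 := by
    have := hprefix 1 le_rfl (by omega)
    omega
  set j := lastReturn w
  have hj₁ : 1 ≤ j := le_lastReturn (by omega) hP₁
  have hjn : j ≤ w.length - 1 := lastReturn_le
  have hPj : (w.take j).sum + 1 = j := sum_take_lastReturn_add_one (by omega) hP₁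
  have hdrop : (w.drop j).length = w.length - j := List.length_drop
  obtain ⟨v, hv, hbump⟩ : ∃ v, IsKList v ∧ bumpLast v = w.drop j := by
    apply exists_isKList_bumpLast_eq
    · omega
    · intro m hm₁ hm₂
      have hle := hprefix (j + m) (by omega) (by omega)
      have hne := sum_take_add_one_ne_of_lastReturn_lt (w := w) (k := j + m) (by omega) (by omega)
      rw [List.take_add, List.sum_append] at hle hne
      omega
    · have := List.sum_take_add_sum_drop w j
      omega
  refine ⟨w.take j, v, hw.take (by omega) hPj, hv, ?_⟩
  rw [hbump, List.take_append_drop]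

lemma eq_of_append_bumpLast_eq {u v u' v' : List ℕ} (hu : IsKList u) (hv : IsKList v)
    (hu' : IsKList u') (hv' : IsKList v') (h : u ++ bumpLast v = u' ++ bumpLast v') :
    u = u' ∧ v = v' := by
  have hlen : u.length = u'.length := by
    rw [← lastReturn_append_bumpLast hu hv, h, lastReturn_append_bumpLast hu' hv']
  obtain ⟨rfl, hbump⟩ := List.append_inj h hlen
  exact ⟨rfl, bumpLast_injective hbump⟩

/-- `u ∈ K_i, v ∈ K_j ⟹ u ∨ v ∈ K_{i+j}`, and every `w ∈ K_i` with
`i ≥ 2` factors uniquely as `w = u ∨ v` with `u ∈ K_j`, `v ∈ K_{i−j}`, `1 ≤ j < i`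
(the lengths `j = |u|` and `i − j = |v|` being determined by the pair `(u, v)`). -/
theorem kwords_free_magma :
    (∀ u v : List ℕ, IsKList u → IsKList v → IsKList (u ++ bumpLast v)) ∧
    (∀ w : List ℕ, IsKList w → 2 ≤ w.length →
      ∃! p : List ℕ × List ℕ,
        IsKList p.1 ∧ IsKList p.2 ∧ w = p.1 ++ bumpLast p.2) := by
  refine ⟨fun u v hu hv => hu.append_bumpLast hv, fun w hw hlen => ?_⟩
  obtain ⟨u, v, hu, hv, rfl⟩ := hw.exists_eq_append_bumpLast hlen
  refine ⟨(u, v), ⟨hu, hv, rfl⟩, ?_⟩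
  rintro ⟨u', v'⟩ ⟨hu', hv', h⟩
  obtain ⟨rfl, rfl⟩ := eq_of_append_bumpLast_eq hu' hv' hu hv h.symm
  rfl
end

section
/- Let p = (p₁ ≥ p₂ ≥ ⋯ ≥ p_k ≥ 1) be a partition of n with k parts. Then N_p equals the number of (unordered) set partitions of {1,…,n+k} into k blocks of cardinalities p₁+1, p₂+1, …, p_k+1 such that the minimal elements of two distinct blocks are never two consecutive integers. -/
/-!
Insert a new point immediately before each value of `φ`. The `n` old points and the `k` new
points fill `{0, …, n + k - 1}`, and the new point `v̂` placed before `v`, together with the old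
points of `φ⁻¹(v)`, forms a block of size `|φ⁻¹(v)| + 1`. Since `φ(t) ≤ t`, `v̂` is the minimum
of its block, and two minima are never consecutive because `v̂` is immediately followed by the
old point `v`. Conversely, the old points are recovered as the non-minima, and `φ(t)` is the
number of non-minima below the minimum of the block of the `t`-th non-minimum. Counting
non-minima is injective on the minima exactly because no two minima are consecutive, and this is
what makes the two constructions inverse to each other.
-/

/-- `Θ(φ)`: the multiset of nonzero fiber cardinalities `|φ⁻¹(j)|`, `j ∈ {1,…,n}`,
of a map `φ : Fin n → Fin n`. -/
def fiberMultiset {n : ℕ} (φ : Fin n → Fin n) : Multiset ℕ :=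
  ((Finset.univ.val : Multiset (Fin n)).map
    (fun j => (Finset.univ.filter (fun t => φ t = j)).card)).filter (· ≠ 0)

open Finset

namespace Finpartition

variable {α : Type*} [Fintype α] [LinearOrder α] {P Q : Finpartition (univ : Finset α)}
  {B : Finset α} {a b : α}

def partMin (P : Finpartition (univ : Finset α)) (a : α) : α :=
  (P.part a).min' (P.part_nonempty.2 (mem_univ a))

lemma partMin_mem_part : P.partMin a ∈ P.part a := min'_mem _ _

lemma partMin_le : P.partMin a ≤ a := min'_le _ _ (P.mem_part_self.2 (mem_univ a))

lemma partMin_eq_of_isLeast (hB : B ∈ P.parts) (hb : b ∈ B) (hbB : ∀ x ∈ B, b ≤ x)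
    (ha : a ∈ B) : P.partMin a = b := by
  have hpart : P.part a = B := P.part_eq_of_mem hB ha
  exact le_antisymm (min'_le _ _ (hpart ▸ hb)) (hbB _ (hpart ▸ partMin_mem_part))

lemma mem_part_iff_partMin_eq : b ∈ P.part a ↔ P.partMin b = P.partMin a := by
  constructor
  · exact partMin_eq_of_isLeast (P.part_mem.2 (mem_univ a)) partMin_mem_part
      (fun x hx => min'_le _ _ hx)
  · intro h
    have hpart : P.part b = P.part a := P.eq_of_mem_parts (P.part_mem.2 (mem_univ b))
      (P.part_mem.2 (mem_univ a)) partMin_mem_part (h ▸ partMin_mem_part)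
    exact hpart ▸ P.mem_part_self.2 (mem_univ b)

lemma partMin_partMin : P.partMin (P.partMin a) = P.partMin a :=
  mem_part_iff_partMin_eq.1 partMin_mem_part

lemma parts_eq_image_part (P : Finpartition (univ : Finset α)) :
    P.parts = univ.image P.part := by
  ext B
  refine ⟨fun hB => ?_, fun hB => ?_⟩
  · obtain ⟨a, -, rfl⟩ := P.part_surjOn hB
    exact mem_image_of_mem _ (mem_univ a)
  · obtain ⟨a, -, rfl⟩ := mem_image.1 hB
    exact P.part_mem.2 (mem_univ a)

lemma ext_partMin (h : ∀ a, P.partMin a = Q.partMin a) : P = Q := by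
  have hpart : P.part = Q.part := by
    ext a b
    rw [mem_part_iff_partMin_eq, mem_part_iff_partMin_eq, h, h]
  ext1
  rw [parts_eq_image_part P, parts_eq_image_part Q, hpart]

def minima (P : Finpartition (univ : Finset α)) : Finset α :=
  univ.filter fun a => P.partMin a = a

lemma mem_minima : a ∈ P.minima ↔ P.partMin a = a := by
  simp [minima]

lemma partMin_mem_minima : P.partMin a ∈ P.minima := mem_minima.2 partMin_partMin

lemma mem_minima_of_isLeast (hB : B ∈ P.parts) (hb : b ∈ B) (hbB : ∀ x ∈ B, b ≤ x) :
    b ∈ P.minima :=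
  mem_minima.2 (partMin_eq_of_isLeast hB hb hbB hb)

lemma card_minima (P : Finpartition (univ : Finset α)) : #P.minima = #P.parts := by
  refine card_nbij P.part (fun a _ => P.part_mem.2 (mem_univ a)) ?_ ?_
  · intro a ha b hb hab
    rw [← mem_minima.1 ha, ← mem_minima.1 hb]
    exact mem_part_iff_partMin_eq.1 (hab ▸ P.mem_part_self.2 (mem_univ a))
  · intro B hB
    obtain ⟨a, -, rfl⟩ := P.part_surjOn hB
    refine ⟨P.partMin a, partMin_mem_minima, ?_⟩
    exact P.part_eq_of_mem (P.part_mem.2 (mem_univ a)) partMin_mem_part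

lemma one_lt_card_of_map_card_parts_eq {p : Multiset ℕ} (hp : ∀ q ∈ p, 0 < q)
    (h : P.parts.val.map card = p.map (· + 1)) (hB : B ∈ P.parts) : 1 < #B := by
  obtain ⟨q, hq, hqB⟩ := Multiset.mem_map.1 (h ▸ Multiset.mem_map_of_mem card hB)
  have := hp q hq
  omega

lemma minima_nonconsec_iff {N : ℕ} (P : Finpartition (univ : Finset (Fin N))) :
    (∀ B ∈ P.parts, ∀ B' ∈ P.parts, B ≠ B' → ∀ b ∈ B, ∀ b' ∈ B',
      (∀ x ∈ B, b ≤ x) → (∀ x ∈ B', b' ≤ x) → (b : ℕ) + 1 ≠ (b' : ℕ)) ↔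
    ∀ a ∈ P.minima, ∀ b ∈ P.minima, (a : ℕ) + 1 ≠ b := by
  constructor
  · intro h a ha b hb hab
    have hpart : ∀ {c}, c ∈ P.minima → ∀ x ∈ P.part c, c ≤ x := fun hc x hx =>
      mem_minima.1 hc ▸ (mem_part_iff_partMin_eq.1 hx ▸ partMin_le)
    refine h _ (P.part_mem.2 (mem_univ a)) _ (P.part_mem.2 (mem_univ b)) (fun hne => ?_) a
      (P.mem_part_self.2 (mem_univ a)) b (P.mem_part_self.2 (mem_univ b)) (hpart ha) (hpart hb) hab
    have := mem_part_iff_partMin_eq.1 (hne ▸ P.mem_part_self.2 (mem_univ a) : a ∈ P.part b)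
    rw [mem_minima.1 ha, mem_minima.1 hb] at this
    omega
  · intro h B hB B' hB' _ b hb b' hb' hbB hb'B'
    exact h b (mem_minima_of_isLeast hB hb hbB) b' (mem_minima_of_isLeast hB' hb' hb'B')

lemma card_compl_minima {n k : ℕ} {P : Finpartition (univ : Finset (Fin (n + k)))}
    (hP : #P.parts = k) : #P.minimaᶜ = n := by
  rw [card_compl, card_minima, hP, Fintype.card_fin, Nat.add_sub_cancel]

end Finpartition

namespace Finset

section RankCompl

variable {N : ℕ} (M : Finset (Fin N)) {x y : Fin N}

def rankCompl (x : Fin N) : ℕ := #{c ∈ Mᶜ | c < x}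

lemma rankCompl_add_card_filter_lt : M.rankCompl x + #{m ∈ M | m < x} = x := by
  have hsplit := card_filter_add_card_filter_not (s := Iio x) (· ∉ M)
  simp only [not_not, Fin.card_Iio] at hsplit
  rw [← hsplit, rankCompl]
  congr 2 <;> ext c <;> simp [and_comm]

lemma rankCompl_mono (h : x ≤ y) : M.rankCompl x ≤ M.rankCompl y :=
  card_le_card fun c hc => by
    simp only [mem_filter] at hc ⊢
    exact ⟨hc.1, hc.2.trans_le h⟩

lemma rankCompl_lt_rankCompl (hx : x ∉ M) (h : x < y) : M.rankCompl x < M.rankCompl y := by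
  refine card_lt_card ⟨fun c hc => ?_, fun hsub => ?_⟩
  · simp only [mem_filter] at hc ⊢
    exact ⟨hc.1, hc.2.trans h⟩
  · simpa using hsub (mem_filter.2 ⟨mem_compl.2 hx, h⟩)

lemma rankCompl_eq_of_mem (hx : x ∈ M) (hxy : (x : ℕ) + 1 = y) :
    M.rankCompl x = M.rankCompl y := by
  unfold rankCompl
  congr 1
  ext c
  simp only [mem_filter, mem_compl, and_congr_right_iff, Fin.lt_def]
  intro hc
  have : (c : ℕ) ≠ x := fun h => hc (Fin.ext h ▸ hx)
  omega

lemma rankCompl_strictMonoOn (hM : ∀ a ∈ M, ∀ b ∈ M, (a : ℕ) + 1 ≠ b) :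
    StrictMonoOn M.rankCompl M := by
  intro a ha b hb hab
  set a' : Fin N := ⟨a + 1, lt_of_le_of_lt (Nat.succ_le_of_lt hab) b.2⟩
  have ha' : a' ∉ M := fun h => hM a ha a' h rfl
  have ha'b : a' < b :=
    lt_of_le_of_ne (Nat.succ_le_of_lt hab) fun h => hM a ha b hb (Fin.val_eq_of_eq h)
  rw [M.rankCompl_eq_of_mem ha (y := a') rfl]
  exact M.rankCompl_lt_rankCompl ha' ha'b

lemma rankCompl_eq_of_strictMono {n : ℕ} {e : Fin n → Fin N} (he : StrictMono e)
    (hrange : Set.range e = ↑Mᶜ) (t : Fin n) : M.rankCompl (e t) = t := by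
  have himage : {c ∈ Mᶜ | c < e t} = (Iio t).image e := by
    ext c
    simp only [mem_filter, mem_image, mem_Iio, ← mem_coe (s := Mᶜ), ← hrange]
    constructor
    · rintro ⟨⟨s, rfl⟩, hs⟩
      exact ⟨s, he.lt_iff_lt.1 hs, rfl⟩
    · rintro ⟨s, hs, rfl⟩
      exact ⟨⟨s, rfl⟩, he hs⟩
  rw [rankCompl, himage, card_image_of_injective _ he.injective, Fin.card_Iio]

end RankCompl

section InsertPoints

variable {n k : ℕ} {S : Finset (Fin n)} (hS : #S = k) {t v w : Fin n}

/-- After inserting a new point immediately before each element of `S`, `oldPos hS t` is the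
position of `t` and `newPos hS v` that of the point inserted before `v ∈ S`. -/
def oldPos (t : Fin n) : Fin (n + k) :=
  ⟨t + #{s ∈ S | s ≤ t}, by have := card_le_card (filter_subset (· ≤ t) S); omega⟩

def newPos (v : Fin n) : Fin (n + k) :=
  ⟨v + #{s ∈ S | s < v}, by have := card_le_card (filter_subset (· < v) S); omega⟩

lemma val_oldPos : (oldPos hS t : ℕ) = t + #{s ∈ S | s ≤ t} := rfl

lemma val_newPos : (newPos hS v : ℕ) = v + #{s ∈ S | s < v} := rfl

lemma oldPos_strictMono : StrictMono (oldPos hS) := by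
  intro t t' h
  have : #{s ∈ S | s ≤ t} ≤ #{s ∈ S | s ≤ t'} :=
    card_le_card (monotone_filter_right S fun _ _ hs => hs.trans h.le)
  rw [Fin.lt_def, val_oldPos, val_oldPos]
  rw [Fin.lt_def] at h
  omega

lemma newPos_add_one (hv : v ∈ S) : (newPos hS v : ℕ) + 1 = oldPos hS v := by
  have : {s ∈ S | s ≤ v} = insert v {s ∈ S | s < v} := by
    ext s
    simp only [mem_filter, mem_insert, le_iff_lt_or_eq]
    constructor
    · rintro ⟨hs, hlt | rfl⟩ <;> simp_all
    · rintro (rfl | ⟨hs, hlt⟩) <;> simp_all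
  rw [val_newPos, val_oldPos, this, card_insert_of_notMem (by simp)]
  omega

lemma newPos_lt_oldPos (hv : v ∈ S) (hvt : v ≤ t) : newPos hS v < oldPos hS t :=
  calc newPos hS v < oldPos hS v := Fin.lt_def.2 (by rw [← newPos_add_one hS hv]; omega)
    _ ≤ oldPos hS t := (oldPos_strictMono hS).monotone hvt

lemma oldPos_lt_newPos (htv : t < v) : oldPos hS t < newPos hS v := by
  have : #{s ∈ S | s ≤ t} ≤ #{s ∈ S | s < v} :=
    card_le_card (monotone_filter_right S fun _ _ hs => hs.trans_lt htv)
  rw [Fin.lt_def, val_oldPos, val_newPos]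
  rw [Fin.lt_def] at htv
  omega

lemma oldPos_ne_newPos (hv : v ∈ S) : oldPos hS t ≠ newPos hS v := by
  intro h
  rcases lt_or_ge t v with htv | hvt
  · exact (oldPos_lt_newPos hS htv).ne h
  · exact (newPos_lt_oldPos hS hv hvt).ne' h

lemma newPos_add_one_lt (hv : v ∈ S) (hvw : v < w) :
    (newPos hS v : ℕ) + 1 < newPos hS w := by
  rw [newPos_add_one hS hv, ← Fin.lt_def]
  exact oldPos_lt_newPos hS hvw

lemma newPos_strictMonoOn : StrictMonoOn (newPos hS) S := fun _ hv _ _ hvw =>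
  Fin.lt_def.2 (Nat.lt_of_succ_lt (newPos_add_one_lt hS hv hvw))

lemma range_oldPos : Set.range (oldPos hS) = ↑(S.image (newPos hS))ᶜ := by
  have hsub : univ.image (oldPos hS) ⊆ (S.image (newPos hS))ᶜ := by
    simp only [subset_iff, mem_image, mem_univ, true_and, mem_compl, not_exists, not_and]
    rintro _ ⟨t, rfl⟩ v hv h
    exact oldPos_ne_newPos hS hv h.symm
  have hcard : #(S.image (newPos hS))ᶜ ≤ #(univ.image (oldPos hS)) := by
    rw [card_compl, card_image_of_injOn (newPos_strictMonoOn hS).injOn, hS,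
      card_image_of_injective _ (oldPos_strictMono hS).injective]
    simp
  rw [← eq_of_subset_of_card_le hsub hcard, coe_image, coe_univ, Set.image_univ]

lemma rankCompl_oldPos : (S.image (newPos hS)).rankCompl (oldPos hS t) = t :=
  rankCompl_eq_of_strictMono _ (oldPos_strictMono hS) (range_oldPos hS) t

lemma rankCompl_newPos (hv : v ∈ S) : (S.image (newPos hS)).rankCompl (newPos hS v) = v := by
  rw [rankCompl_eq_of_mem _ (mem_image_of_mem _ hv) (newPos_add_one hS hv), rankCompl_oldPos]

lemma oldPos_eq_orderEmbOfFin {M : Finset (Fin (n + k))} (hM : S.image (newPos hS) = M)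
    (hMc : #Mᶜ = n) : oldPos hS = Mᶜ.orderEmbOfFin hMc := by
  refine orderEmbOfFin_unique hMc (fun t => ?_) (oldPos_strictMono hS)
  rw [← hM, ← mem_coe, ← range_oldPos hS]
  exact Set.mem_range_self t

lemma newPos_eq_of_rankCompl {M : Finset (Fin (n + k))}
    (hM : ∀ a ∈ M, ∀ b ∈ M, (a : ℕ) + 1 ≠ b)
    (hSM : ∀ v, v ∈ S ↔ ∃ m ∈ M, M.rankCompl m = v) {m : Fin (n + k)} (hm : m ∈ M)
    (hv : M.rankCompl m = v) : newPos hS v = m := by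
  have hmono := M.rankCompl_strictMonoOn hM
  have hcount : #{s ∈ S | s < v} = #{m' ∈ M | m' < m} := by
    rw [← card_image_of_injective _ Fin.val_injective,
      ← card_image_of_injOn (hmono.injOn.mono (filter_subset _ _))]
    congr 1
    ext i
    simp only [mem_image, mem_filter]
    constructor
    · rintro ⟨s, ⟨hs, hsv⟩, rfl⟩
      obtain ⟨m', hm', hm's⟩ := (hSM s).1 hs
      refine ⟨m', ⟨hm', (hmono.lt_iff_lt hm' hm).1 ?_⟩, hm's⟩
      rw [hm's, hv]
      exact hsv
    · rintro ⟨m', ⟨hm', hlt⟩, rfl⟩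
      have hlt' : M.rankCompl m' < v := hv ▸ hmono hm' hm hlt
      exact ⟨⟨_, hlt'.trans v.2⟩, ⟨(hSM _).2 ⟨m', hm', rfl⟩, hlt'⟩, rfl⟩
  ext
  rw [val_newPos, hcount, ← hv, M.rankCompl_add_card_filter_lt]

end InsertPoints

end Finset

lemma fiberMultiset_eq_map_image {n : ℕ} (φ : Fin n → Fin n) :
    fiberMultiset φ = (univ.image φ).val.map fun v => #{t | φ t = v} := by
  rw [fiberMultiset, Multiset.filter_map, ← filter_val]
  congr 2
  ext v
  simp [filter_eq_empty_iff]

lemma card_fiberMultiset {n : ℕ} (φ : Fin n → Fin n) :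
    Multiset.card (fiberMultiset φ) = #(univ.image φ) := by
  rw [fiberMultiset_eq_map_image, Multiset.card_map, card_val]

namespace Finpartition

section OfSubexceedent

variable {n k : ℕ} {φ : Fin n → Fin n} (hk : #(univ.image φ) = k) {t v w : Fin n}
  {x : Fin (n + k)}

def markerBlock (v : Fin n) : Finset (Fin (n + k)) :=
  insert (newPos hk v) (image (oldPos hk) {t | φ t = v})

lemma mem_markerBlock :
    x ∈ markerBlock hk v ↔ x = newPos hk v ∨ ∃ t, φ t = v ∧ oldPos hk t = x := by
  simp [markerBlock]

lemma newPos_mem_markerBlock : newPos hk v ∈ markerBlock hk v := mem_insert_self _ _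

lemma oldPos_mem_markerBlock : oldPos hk t ∈ markerBlock hk (φ t) :=
  (mem_markerBlock hk).2 (Or.inr ⟨t, rfl, rfl⟩)

lemma exists_mem_markerBlock (x : Fin (n + k)) :
    ∃ v ∈ univ.image φ, x ∈ markerBlock hk v := by
  by_cases hx : x ∈ (univ.image φ).image (newPos hk)
  · obtain ⟨v, hv, rfl⟩ := mem_image.1 hx
    exact ⟨v, hv, newPos_mem_markerBlock hk⟩
  · obtain ⟨t, rfl⟩ : x ∈ Set.range (oldPos hk) := by rw [range_oldPos]; simpa using hx
    exact ⟨φ t, mem_image_of_mem _ (mem_univ t), oldPos_mem_markerBlock hk⟩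

lemma eq_of_mem_markerBlock (hv : v ∈ univ.image φ) (hw : w ∈ univ.image φ)
    (hxv : x ∈ markerBlock hk v) (hxw : x ∈ markerBlock hk w) : v = w := by
  rcases (mem_markerBlock hk).1 hxv with rfl | ⟨t, rfl, rfl⟩ <;>
    rcases (mem_markerBlock hk).1 hxw with h | ⟨t', rfl, h⟩
  · exact (newPos_strictMonoOn hk).injOn hv hw h
  · exact absurd h (oldPos_ne_newPos hk hv)
  · exact absurd h (oldPos_ne_newPos hk hw)
  · rw [(oldPos_strictMono hk).injective h]

def ofSubexceedent : Finpartition (univ : Finset (Fin (n + k))) :=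
  ofExistsUnique ((univ.image φ).image (markerBlock hk)) (fun _ _ => subset_univ _)
    (fun x _ => by
      obtain ⟨v, hv, hxv⟩ := exists_mem_markerBlock hk x
      refine ⟨markerBlock hk v, ⟨mem_image_of_mem _ hv, hxv⟩, ?_⟩
      rintro _ ⟨hB, hxB⟩
      obtain ⟨w, hw, rfl⟩ := mem_image.1 hB
      rw [eq_of_mem_markerBlock hk hw hv hxB hxv])
    (by
      simp only [mem_image, not_exists, not_and]
      exact fun v _ h => notMem_empty _ (h ▸ newPos_mem_markerBlock hk))

lemma markerBlock_mem_parts (hv : v ∈ univ.image φ) :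
    markerBlock hk v ∈ (ofSubexceedent hk).parts :=
  mem_image_of_mem _ hv

lemma partMin_ofSubexceedent (hφ : ∀ t, φ t ≤ t) (hv : v ∈ univ.image φ)
    (hx : x ∈ markerBlock hk v) : (ofSubexceedent hk).partMin x = newPos hk v := by
  refine partMin_eq_of_isLeast (markerBlock_mem_parts hk hv) (newPos_mem_markerBlock hk)
    (fun y hy => ?_) hx
  rcases (mem_markerBlock hk).1 hy with rfl | ⟨t, rfl, rfl⟩
  · exact le_rfl
  · exact (newPos_lt_oldPos hk hv (hφ t)).le

lemma minima_ofSubexceedent (hφ : ∀ t, φ t ≤ t) :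
    (ofSubexceedent hk).minima = (univ.image φ).image (newPos hk) := by
  ext x
  obtain ⟨v, hv, hxv⟩ := exists_mem_markerBlock hk x
  rw [mem_minima, partMin_ofSubexceedent hk hφ hv hxv, mem_image]
  refine ⟨fun h => ⟨v, hv, h⟩, ?_⟩
  rintro ⟨w, hw, rfl⟩
  rw [eq_of_mem_markerBlock hk hv hw hxv (newPos_mem_markerBlock hk)]

lemma minima_ofSubexceedent_nonconsec (hφ : ∀ t, φ t ≤ t) :
    ∀ a ∈ (ofSubexceedent hk).minima, ∀ b ∈ (ofSubexceedent hk).minima, (a : ℕ) + 1 ≠ b := by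
  rw [minima_ofSubexceedent hk hφ]
  intro a ha b hb h
  obtain ⟨v, hv, rfl⟩ := mem_image.1 ha
  obtain ⟨w, hw, rfl⟩ := mem_image.1 hb
  rcases lt_or_ge v w with hvw | hwv
  · exact (newPos_add_one_lt hk hv hvw).ne h
  · have := (newPos_strictMonoOn hk).monotoneOn hw hv hwv
    rw [Fin.le_def] at this
    omega

lemma card_markerBlock (hv : v ∈ univ.image φ) :
    #(markerBlock hk v) = #{t | φ t = v} + 1 := by
  rw [markerBlock, card_insert_of_notMem,
    card_image_of_injective _ (oldPos_strictMono hk).injective]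
  simp only [mem_image, not_exists, not_and]
  exact fun t _ => oldPos_ne_newPos hk hv

lemma markerBlock_injOn : Set.InjOn (markerBlock hk) ↑(univ.image φ) := fun _ hv _ hw h =>
  eq_of_mem_markerBlock hk hv hw (newPos_mem_markerBlock hk) (h ▸ newPos_mem_markerBlock hk)

lemma card_parts_ofSubexceedent : #(ofSubexceedent hk).parts = k := by
  rw [ofSubexceedent, ofExistsUnique_parts, card_image_of_injOn (markerBlock_injOn hk), hk]

lemma map_card_parts_ofSubexceedent :
    (ofSubexceedent hk).parts.val.map card = (fiberMultiset φ).map (· + 1) := by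
  rw [ofSubexceedent, ofExistsUnique_parts, image_val_of_injOn (markerBlock_injOn hk),
    Multiset.map_map,
    fiberMultiset_eq_map_image, Multiset.map_map]
  exact Multiset.map_congr rfl fun v hv => card_markerBlock hk hv

end OfSubexceedent

section ToSubexceedent

variable {n k : ℕ} {P : Finpartition (univ : Finset (Fin (n + k)))} (hP : #P.minimaᶜ = n)
  {t : Fin n}

lemma rankCompl_orderEmbOfFin : P.minima.rankCompl (P.minimaᶜ.orderEmbOfFin hP t) = t :=
  rankCompl_eq_of_strictMono _ (orderEmbOfFin _ hP).strictMono (range_orderEmbOfFin _ hP) t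

lemma rankCompl_partMin_orderEmbOfFin_le :
    P.minima.rankCompl (P.partMin (P.minimaᶜ.orderEmbOfFin hP t)) ≤ t :=
  rankCompl_orderEmbOfFin hP ▸ rankCompl_mono _ partMin_le

variable (P) in
def toSubexceedent (t : Fin n) : Fin n :=
  ⟨P.minima.rankCompl (P.partMin (P.minimaᶜ.orderEmbOfFin hP t)),
    (rankCompl_partMin_orderEmbOfFin_le hP).trans_lt t.2⟩

lemma val_toSubexceedent :
    (P.toSubexceedent hP t : ℕ) = P.minima.rankCompl (P.partMin (P.minimaᶜ.orderEmbOfFin hP t)) :=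
  rfl

lemma toSubexceedent_le : P.toSubexceedent hP t ≤ t :=
  rankCompl_partMin_orderEmbOfFin_le hP

lemma toSubexceedent_eq_of_eq_ofSubexceedent {φ : Fin n → Fin n} {hk : #(univ.image φ) = k}
    (hφ : ∀ t, φ t ≤ t) (h : P = ofSubexceedent hk) : P.toSubexceedent hP = φ := by
  subst h
  have hemb := oldPos_eq_orderEmbOfFin hk (minima_ofSubexceedent hk hφ).symm hP
  funext t
  ext
  rw [toSubexceedent, Fin.val_mk, ← hemb,
    partMin_ofSubexceedent hk hφ (mem_image_of_mem _ (mem_univ t)) (oldPos_mem_markerBlock hk),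
    minima_ofSubexceedent hk hφ, rankCompl_newPos hk (mem_image_of_mem _ (mem_univ t))]

variable {hP} (hmin : ∀ a ∈ P.minima, ∀ b ∈ P.minima, (a : ℕ) + 1 ≠ b)
  (hsize : ∀ B ∈ P.parts, 1 < #B)
include hsize

lemma exists_partMin_orderEmbOfFin_eq {m : Fin (n + k)} (hm : m ∈ P.minima) :
    ∃ t, P.partMin (P.minimaᶜ.orderEmbOfFin hP t) = m := by
  obtain ⟨x, hx, hxm⟩ := exists_mem_ne (hsize _ (P.part_mem.2 (mem_univ m))) m
  have hmin_x : P.partMin x = m := (mem_part_iff_partMin_eq.1 hx).trans (mem_minima.1 hm)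
  obtain ⟨t, rfl⟩ : x ∈ Set.range (P.minimaᶜ.orderEmbOfFin hP) := by
    rw [range_orderEmbOfFin, mem_coe, mem_compl, mem_minima, hmin_x]
    exact hxm.symm
  exact ⟨t, hmin_x⟩

lemma image_val_image_toSubexceedent :
    (univ.image (P.toSubexceedent hP)).image Fin.val = P.minima.image P.minima.rankCompl := by
  ext i
  simp only [mem_image, mem_univ, true_and]
  constructor
  · rintro ⟨_, ⟨t, rfl⟩, rfl⟩
    exact ⟨_, partMin_mem_minima, rfl⟩
  · rintro ⟨m, hm, rfl⟩
    obtain ⟨t, ht⟩ := exists_partMin_orderEmbOfFin_eq hsize hm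
    exact ⟨_, ⟨t, rfl⟩, by rw [val_toSubexceedent, ht]⟩

lemma mem_image_toSubexceedent_iff {v : Fin n} :
    v ∈ univ.image (P.toSubexceedent hP) ↔ ∃ m ∈ P.minima, P.minima.rankCompl m = v := by
  rw [← Fin.val_injective.mem_finset_image (s := univ.image _),
    image_val_image_toSubexceedent hsize, mem_image]

include hmin in
lemma card_image_toSubexceedent : #(univ.image (P.toSubexceedent hP)) = #P.minima := by
  rw [← card_image_of_injective _ Fin.val_injective, image_val_image_toSubexceedent hsize,
    card_image_of_injOn (P.minima.rankCompl_strictMonoOn hmin).injOn]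

variable (hk : #(univ.image (P.toSubexceedent hP)) = k)
include hmin

lemma newPos_toSubexceedent_eq {m : Fin (n + k)} (hm : m ∈ P.minima) {v : Fin n}
    (hv : P.minima.rankCompl m = v) : newPos hk v = m :=
  newPos_eq_of_rankCompl hk hmin (fun _ => mem_image_toSubexceedent_iff hsize) hm hv

lemma image_newPos_toSubexceedent :
    (univ.image (P.toSubexceedent hP)).image (newPos hk) = P.minima := by
  ext x
  constructor
  · intro hx
    obtain ⟨v, hv, rfl⟩ := mem_image.1 hx
    obtain ⟨m, hm, hmv⟩ := (mem_image_toSubexceedent_iff hsize).1 hv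
    exact newPos_toSubexceedent_eq hmin hsize hk hm hmv ▸ hm
  · intro hx
    have hrank := mem_image_of_mem P.minima.rankCompl hx
    rw [← image_val_image_toSubexceedent (hP := hP) hsize] at hrank
    obtain ⟨v, hv, hvx⟩ := mem_image.1 hrank
    exact mem_image.2 ⟨v, hv, newPos_toSubexceedent_eq hmin hsize hk hx hvx.symm⟩

lemma ofSubexceedent_toSubexceedent : ofSubexceedent hk = P := by
  have himage := image_newPos_toSubexceedent hmin hsize hk
  have hemb := oldPos_eq_orderEmbOfFin hk himage hP
  have hφ : ∀ t, P.toSubexceedent hP t ≤ t := fun _ => toSubexceedent_le hP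
  refine ext_partMin fun x => ?_
  by_cases hx : x ∈ P.minima
  · obtain ⟨v, hv, rfl⟩ := mem_image.1 (himage ▸ hx)
    rw [partMin_ofSubexceedent hk hφ hv (newPos_mem_markerBlock hk)]
    exact (mem_minima.1 hx).symm
  · obtain ⟨t, rfl⟩ : x ∈ Set.range (P.minimaᶜ.orderEmbOfFin hP) := by
      rw [range_orderEmbOfFin, mem_coe, mem_compl]
      exact hx
    rw [← hemb, partMin_ofSubexceedent hk hφ (mem_image_of_mem _ (mem_univ t))
      (oldPos_mem_markerBlock hk), hemb]
    exact newPos_toSubexceedent_eq hmin hsize hk partMin_mem_minima rfl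

end ToSubexceedent

end Finpartition

open Finpartition

/-- for a partition `p` of `n` with `k` parts, `N_p` (the number of
subexceedent functions `φ ∈ Leib(n)` with `Θ(φ) = p`) equals the number of set
partitions of `{1,…,n+k}` into `k` blocks of sizes `p₁+1,…,p_k+1` in which the
minima of two distinct blocks are never consecutive integers. -/
theorem Np_eq_card_set_partitions (n k : ℕ) (p : n.Partition)
    (hk : p.parts.card = k) :
    Nat.card {φ : Fin n → Fin n // (∀ j, φ j ≤ j) ∧ fiberMultiset φ = p.parts} =
    Nat.card {P : Finpartition (Finset.univ : Finset (Fin (n + k))) //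
      P.parts.val.map Finset.card = p.parts.map (· + 1) ∧
      ∀ B ∈ P.parts, ∀ B' ∈ P.parts, B ≠ B' →
        ∀ b ∈ B, ∀ b' ∈ B',
          (∀ x ∈ B, b ≤ x) → (∀ x ∈ B', b' ≤ x) → (b : ℕ) + 1 ≠ (b' : ℕ)} := by
  have hrange {φ : Fin n → Fin n} (h : fiberMultiset φ = p.parts) : #(univ.image φ) = k := by
    rw [← card_fiberMultiset, h, hk]
  have hcompl {φ : Fin n → Fin n} (h : fiberMultiset φ = p.parts) :
      #(ofSubexceedent (hrange h)).minimaᶜ = n :=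
    card_compl_minima (card_parts_ofSubexceedent _)
  refine Nat.card_eq_of_bijective (fun φ => ⟨ofSubexceedent (hrange φ.2.2),
    by rw [map_card_parts_ofSubexceedent, φ.2.2],
    (minima_nonconsec_iff _).2 (minima_ofSubexceedent_nonconsec _ φ.2.1)⟩) ⟨?_, ?_⟩
  · rintro ⟨φ, hφ, hfib⟩ ⟨ψ, hψ, hfib'⟩ h
    exact Subtype.ext <| (toSubexceedent_eq_of_eq_ofSubexceedent (hcompl hfib) hφ rfl).symm.trans
      (toSubexceedent_eq_of_eq_ofSubexceedent _ hψ (congrArg Subtype.val h))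
  · rintro ⟨P, hsizes, hcons⟩
    have hparts : #P.parts = k := by simpa [hk] using congrArg Multiset.card hsizes
    have hsize : ∀ B ∈ P.parts, 1 < #B := fun _ =>
      one_lt_card_of_map_card_parts_eq (fun _ => p.parts_pos) hsizes
    have hP := card_compl_minima hparts
    have hmin := (minima_nonconsec_iff P).1 hcons
    have hkφ : #(univ.image (P.toSubexceedent hP)) = k :=
      (card_image_toSubexceedent hmin hsize).trans ((card_minima P).trans hparts)
    have hQ := ofSubexceedent_toSubexceedent hmin hsize hkφ
    have hfib : fiberMultiset (P.toSubexceedent hP) = p.parts :=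
      Multiset.map_injective (add_left_injective 1) <| by
        rw [← map_card_parts_ofSubexceedent hkφ, hQ, hsizes]
    exact ⟨⟨_, fun _ => toSubexceedent_le hP, hfib⟩, Subtype.ext hQ⟩
end

section
/- For every n ≥ 1 and every 1 ≤ k ≤ n, the number of φ ∈ Leib(n) whose image has exactly k elements equals the number of permutations σ of {1,…,n} with exactly k−1 descents, where a descent of σ is an index i ∈ {1,…,n−1} with σ(i) > σ(i+1). -/
/-!
Both sides satisfy the Eulerian recurrence `A (n + 1) k = k * A n k + (n + 2 - k) * A n (k - 1)`.
A subexceedent map on `n + 1` points is a subexceedent map `ψ` on `n` points together with a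
value `v` for the new last point, and its image grows by one exactly when `v` is not already in
the image of `ψ`. A permutation of `n + 1` letters is a permutation `σ` of `n` letters with the
new maximal letter inserted into one of the `n + 1` gaps of `σ`; the number of descents stays
the same exactly for the final gap and for the gaps inside a descent, so the number
`#(descents σ) + 1` of ascending runs plays the role of the size of the image.
-/

open Finset

section Descents

variable {α : Type*} [LinearOrder α] {n : ℕ}

def descents (w : Fin (n + 1) → α) : Finset (Fin n) :=
  {i | w i.succ < w i.castSucc}

/-- Gap `p` lies just before entry `p`; besides the gaps splitting a descent, the final gap
counts, as if `w` ended with `-∞`. -/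
def descentGaps (w : Fin (n + 1) → α) : Finset (Fin (n + 2)) :=
  insert (Fin.last _) ((descents w).map (Fin.succEmb _ |>.trans Fin.castSuccEmb))

lemma mem_descentGaps {w : Fin (n + 1) → α} {p : Fin (n + 2)} :
    p ∈ descentGaps w ↔
      p = Fin.last _ ∨ ∃ i : Fin n, w i.succ < w i.castSucc ∧ i.castSucc.succ = p := by
  simp [descentGaps, descents]

lemma card_descentGaps (w : Fin (n + 1) → α) : #(descentGaps w) = #(descents w) + 1 := by
  rw [descentGaps, card_insert_of_notMem, card_map]
  simp [Fin.castSucc_ne_last]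

lemma zero_notMem_descentGaps (w : Fin (n + 1) → α) : 0 ∉ descentGaps w := by
  simp [descentGaps, Fin.ext_iff]

lemma succ_mem_descentGaps_cons (a : α) (w : Fin (n + 1) → α) (p : Fin (n + 2)) :
    p.succ ∈ descentGaps (Fin.cons a w : Fin (n + 2) → α) ↔
      if p = 0 then w 0 < a else p ∈ descentGaps w := by
  simp only [mem_descentGaps, Fin.exists_fin_succ, Fin.succ_inj, Fin.cons_succ]
  cases p using Fin.cases with
  | zero => simp [Fin.ext_iff]
  | succ p => simp [eq_comm (a := (0 : Fin _))]

lemma descents_comp_strictMono {β : Type*} [LinearOrder β] (w : Fin (n + 1) → α)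
    {g : α → β} (hg : StrictMono g) : descents (g ∘ w) = descents w := by
  simp [descents, hg.lt_iff_lt]

lemma descentGaps_comp_strictMono {β : Type*} [LinearOrder β] (w : Fin (n + 1) → α)
    {g : α → β} (hg : StrictMono g) : descentGaps (g ∘ w) = descentGaps w := by
  rw [descentGaps, descentGaps, descents_comp_strictMono w hg]

lemma card_descents_cons (a : α) (w : Fin (n + 1) → α) :
    #(descents (Fin.cons a w : Fin (n + 2) → α)) =
      (if w 0 < a then 1 else 0) + #(descents w) := by
  simp only [descents, card_filter, Fin.sum_univ_succ, ← Fin.succ_castSucc, Fin.cons_succ,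
    Fin.castSucc_zero, Fin.cons_zero]

lemma card_descents_insertNth_zero (w : Fin (n + 1) → α) {v : α} (hv : ∀ i, w i < v) :
    #(descents (Fin.insertNth 0 v w)) = #(descents w) + 1 := by
  rw [Fin.insertNth_zero', card_descents_cons, if_pos (hv 0), add_comm]

theorem card_descents_insertNth (w : Fin (n + 1) → α) {v : α} (hv : ∀ i, w i < v)
    (p : Fin (n + 2)) :
    #(descents (p.insertNth v w)) =
      if p ∈ descentGaps w then #(descents w) else #(descents w) + 1 := by
  cases p using Fin.cases with
  | zero => rw [card_descents_insertNth_zero w hv, if_neg (zero_notMem_descentGaps w)]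
  | succ p =>
    induction n with
    | zero =>
      rw [Subsingleton.elim (α := Fin 1) p (Fin.last 0), Fin.succ_last, Fin.insertNth_last']
      have hlast : Fin.snoc (α := fun _ => α) w v 1 = v := Fin.snoc_last (α := fun _ => α) v w
      simp [descents, descentGaps, hlast, (hv 0).le]
    | succ n ih =>
      rw [← Fin.cons_self_tail w, Fin.insertNth_succ_cons, card_descents_cons,
        card_descents_cons]
      simp only [succ_mem_descentGaps_cons]
      have hv' : ∀ i, Fin.tail w i < v := fun i => hv i.succ
      cases p using Fin.cases with
      | zero =>
        rw [card_descents_insertNth_zero _ hv', Fin.insertNth_apply_same,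
          if_neg (hv 0).not_gt]
        split_ifs <;> omega
      | succ q =>
        rw [ih (Fin.tail w) hv' q]
        have hhead : (q.succ.insertNth v (Fin.tail w) : Fin (n + 2) → α) 0 = Fin.tail w 0 := by
          simpa using Fin.insertNth_apply_succAbove (α := fun _ => α) q.succ v (Fin.tail w) 0
        simp only [hhead, if_neg (Fin.succ_ne_zero q)]
        split_ifs <;> omega

end Descents

theorem card_filter_eq_of_bijective_prod {X Y Z : Type*} [Fintype X] [Fintype Y] [Fintype Z]
    [DecidableEq Y] (s : X → ℕ) (G : X → Finset Y) (hG : ∀ x, #(G x) = s x)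
    (f : X × Y → Z) (hf : Function.Bijective f) (t : Z → ℕ)
    (ht : ∀ x y, t (f (x, y)) = if y ∈ G x then s x else s x + 1) (k : ℕ) :
    #{z | t z = k} = k * #{x | s x = k} + (Fintype.card Y + 1 - k) * #{x | s x + 1 = k} := by
  have hfiber : ∀ x, #{y | t (f (x, y)) = k} =
      (if s x = k then k else 0) + (if s x + 1 = k then Fintype.card Y + 1 - k else 0) := by
    intro x
    by_cases h₁ : s x = k
    · have : ({y | t (f (x, y)) = k} : Finset Y) = G x := by
        ext y; by_cases hy : y ∈ G x <;> simp [ht, hy, h₁]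
      rw [this, hG, if_pos h₁, if_neg (by omega), add_zero, h₁]
    by_cases h₂ : s x + 1 = k
    · have : ({y | t (f (x, y)) = k} : Finset Y) = (G x)ᶜ := by
        ext y; by_cases hy : y ∈ G x <;> simp [ht, hy, h₁, h₂]
      rw [this, card_compl, hG, if_neg h₁, if_pos h₂]
      omega
    · have : ({y | t (f (x, y)) = k} : Finset Y) = ∅ := by
        ext y; by_cases hy : y ∈ G x <;> simp [ht, hy, h₁, h₂]
      rw [this, card_empty, if_neg h₁, if_neg h₂]
  calc #{z | t z = k} = #{q : X × Y | t (f q) = k} :=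
        (card_bijective f hf (fun q => by simp)).symm
    _ = ∑ x, #{y | t (f (x, y)) = k} := by
        simp only [card_filter, Fintype.sum_prod_type]
    _ = _ := by
        simp only [hfiber, sum_add_distrib, ← sum_filter, sum_const, smul_eq_mul]
        ring

abbrev Subexceedent (n : ℕ) := {φ : Fin n → Fin n // ∀ j, φ j ≤ j}

namespace Subexceedent

variable {n : ℕ}

def snoc (ψ : Subexceedent n) (v : Fin (n + 1)) : Subexceedent (n + 1) :=
  ⟨Fin.snoc (Fin.castSucc ∘ ψ.1) v, fun j => by
    cases j using Fin.lastCases with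
    | last => simp [Fin.le_last]
    | cast j => simpa using ψ.2 j⟩

lemma snoc_bijective :
    Function.Bijective (fun q : Subexceedent n × Fin (n + 1) => q.1.snoc q.2) := by
  refine ⟨fun q q' h => ?_, fun φ => ?_⟩
  · have h' := congrArg Subtype.val h
    simp only [snoc, Fin.snoc_inj] at h'
    obtain ⟨hψ, hv⟩ := h'
    exact Prod.ext (Subtype.ext ((Fin.castSucc_injective n).comp_left hψ)) hv
  · have hne : ∀ j : Fin n, φ.1 j.castSucc ≠ Fin.last n := fun j =>
      ((φ.2 j.castSucc).trans_lt (Fin.castSucc_lt_last j)).ne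
    refine ⟨(⟨fun j => (φ.1 j.castSucc).castPred (hne j), fun j => ?_⟩, φ.1 (Fin.last n)),
      ?_⟩
    · rw [← Fin.castSucc_le_castSucc_iff, Fin.castSucc_castPred]
      exact φ.2 j.castSucc
    · exact Subtype.ext <|
        (congrArg₂ Fin.snoc (funext fun j => Fin.castSucc_castPred _ (hne j)) rfl).trans
          (Fin.snoc_init_self φ.1)

end Subexceedent

lemma univ_image_snoc {β : Type*} [DecidableEq β] {n : ℕ} (f : Fin n → β) (x : β) :
    univ.image (Fin.snoc f x : Fin (n + 1) → β) = insert x (univ.image f) := by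
  apply coe_injective
  simp [Fin.range_snoc]

lemma card_subexceedent_image_succ (n k : ℕ) :
    #{φ : Subexceedent (n + 1) | #(univ.image φ.1) = k} =
      k * #{ψ : Subexceedent n | #(univ.image ψ.1) = k} +
        (n + 2 - k) * #{ψ : Subexceedent n | #(univ.image ψ.1) + 1 = k} := by
  have hG : ∀ ψ : Subexceedent n,
      #(univ.image (Fin.castSucc ∘ ψ.1)) = #(univ.image ψ.1) := fun ψ => by
    rw [← image_image, card_image_of_injective _ (Fin.castSucc_injective n)]
  have ht : ∀ (ψ : Subexceedent n) (v : Fin (n + 1)), #(univ.image (ψ.snoc v).1) =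
      if v ∈ univ.image (Fin.castSucc ∘ ψ.1) then #(univ.image ψ.1)
      else #(univ.image ψ.1) + 1 :=
    fun ψ v => by rw [Subexceedent.snoc, univ_image_snoc, card_insert_eq_ite, hG]
  rw [card_filter_eq_of_bijective_prod _ _ hG _ Subexceedent.snoc_bijective _ ht,
    Fintype.card_fin]

section InsertMax

variable {n : ℕ}

def insertMax (p : Fin (n + 2)) (σ : Equiv.Perm (Fin (n + 1))) : Equiv.Perm (Fin (n + 2)) :=
  (finSuccEquiv' p).trans ((Equiv.optionCongr σ).trans (finSuccEquiv' (Fin.last _)).symm)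

lemma coe_insertMax (p : Fin (n + 2)) (σ : Equiv.Perm (Fin (n + 1))) :
    ⇑(insertMax p σ) = p.insertNth (Fin.last _) (Fin.castSucc ∘ σ) := by
  funext i
  cases i using Fin.succAboveCases p <;> simp [insertMax]

lemma insertMax_symm_last (p : Fin (n + 2)) (σ : Equiv.Perm (Fin (n + 1))) :
    (insertMax p σ).symm (Fin.last _) = p := by
  rw [Equiv.symm_apply_eq]
  simp [insertMax]

lemma insertMax_bijective :
    Function.Bijective
      (fun q : Equiv.Perm (Fin (n + 1)) × Fin (n + 2) => insertMax q.2 q.1) := by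
  refine (Fintype.bijective_iff_injective_and_card _).mpr ⟨fun q q' h => ?_, ?_⟩
  · obtain ⟨σ, p⟩ := q
    obtain ⟨σ', p'⟩ := q'
    replace h : insertMax p σ = insertMax p' σ' := h
    obtain rfl : p = p' := by
      rw [← insertMax_symm_last p σ, h, insertMax_symm_last]
    have h' := congrArg DFunLike.coe h
    simp only [coe_insertMax, Fin.insertNth_inj, true_and] at h'
    simpa using Equiv.ext (congrFun ((Fin.castSucc_injective _).comp_left h'))
  · simp [Fintype.card_perm, Nat.factorial_succ]
    ring

end InsertMax

lemma card_perm_descents_succ (n k : ℕ) :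
    #{τ : Equiv.Perm (Fin (n + 2)) | #(descents τ) + 1 = k} =
      k * #{σ : Equiv.Perm (Fin (n + 1)) | #(descents σ) + 1 = k} +
        (n + 3 - k) * #{σ : Equiv.Perm (Fin (n + 1)) | #(descents σ) + 1 + 1 = k} := by
  have ht : ∀ (σ : Equiv.Perm (Fin (n + 1))) (p : Fin (n + 2)),
      #(descents (insertMax p σ)) + 1 =
        if p ∈ descentGaps σ then #(descents σ) + 1 else #(descents σ) + 1 + 1 := by
    intro σ p
    rw [coe_insertMax,
      card_descents_insertNth (Fin.castSucc ∘ σ) (fun i => Fin.castSucc_lt_last (σ i)),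
      descentGaps_comp_strictMono _ Fin.strictMono_castSucc,
      descents_comp_strictMono _ Fin.strictMono_castSucc]
    split_ifs <;> rfl
  rw [card_filter_eq_of_bijective_prod
      (fun σ : Equiv.Perm (Fin (n + 1)) => #(descents σ) + 1) (fun σ => descentGaps σ)
      (fun σ => card_descentGaps σ) _ insertMax_bijective _ ht,
    Fintype.card_fin]

theorem card_subexceedent_image_eq_card_perm_descents (n k : ℕ) :
    #{φ : Subexceedent (n + 1) | #(univ.image φ.1) = k} =
      #{σ : Equiv.Perm (Fin (n + 1)) | #(descents σ) + 1 = k} := by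
  induction n generalizing k with
  | zero =>
    have hφ : ∀ φ : Subexceedent 1, #(univ.image φ.1) = 1 := by simp
    have hσ : ∀ σ : Equiv.Perm (Fin 1), #(descents σ) = 0 := by simp [descents]
    simp only [hφ, hσ, zero_add]
    by_cases hk : 1 = k
    · simp only [hk, filter_true]
      rfl
    · simp only [hk, filter_false, card_empty]
  | succ n ih =>
    rw [card_subexceedent_image_succ, card_perm_descents_succ, ih]
    congr 2
    rcases k with _ | k
    · simp
    · simp only [Nat.add_right_cancel_iff, ih]

theorem card_leib_image_eq_card_descents_general (m k : ℕ) (hk1 : 1 ≤ k) :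
    Nat.card {φ : Fin (m + 1) → Fin (m + 1) //
      (∀ j, φ j ≤ j) ∧ (Finset.univ.image φ).card = k} =
    Nat.card {σ : Equiv.Perm (Fin (m + 1)) //
      (Finset.univ.filter (fun i : Fin m => σ i.succ < σ i.castSucc)).card
        = k - 1} := by
  calc _ = #{φ : Subexceedent (m + 1) | #(univ.image φ.1) = k} := by
        rw [← Nat.card_congr (Equiv.subtypeSubtypeEquivSubtypeInter _ _),
          Nat.card_eq_fintype_card, Fintype.card_subtype]
    _ = #{σ : Equiv.Perm (Fin (m + 1)) | #(descents σ) + 1 = k} :=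
        card_subexceedent_image_eq_card_perm_descents m k
    _ = _ := by
        rw [Nat.card_eq_fintype_card, Fintype.card_subtype]
        congr 1
        refine filter_congr fun σ _ => ?_
        simp only [descents]
        omega

/-- for every `n = m + 1 ≥ 1` and `1 ≤ k ≤ n`, the number of
subexceedent functions `φ ∈ Leib(n)` whose image has exactly `k` elements equals
the number of permutations of `{1,…,n}` with exactly `k − 1` descents
(a descent being an index `i ∈ {1,…,n−1}` with `σ(i) > σ(i+1)`). -/
theorem card_leib_image_eq_card_descents (m k : ℕ) (hk1 : 1 ≤ k)
    (hk2 : k ≤ m + 1) :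
    Nat.card {φ : Fin (m + 1) → Fin (m + 1) //
      (∀ j, φ j ≤ j) ∧ (Finset.univ.image φ).card = k} =
    Nat.card {σ : Equiv.Perm (Fin (m + 1)) //
      (Finset.univ.filter (fun i : Fin m => σ i.succ < σ i.castSucc)).card
        = k - 1} :=
  card_leib_image_eq_card_descents_general m k hk1
end
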